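/- arXiv:math/0412308 — 4 statements merged into one kernel-verified Lean document; each statement's English description precedes it below -/
import Mathlib

section
/- If -1/2 ≤ α ≤ 1/2, then (α + 1/2)² ‖u‖² ≤ ‖(α+W)u‖² for all u in W₀. -/
open MeasureTheory Complex Filter Topology Metric
open scoped ENNReal NNReal InnerProductSpace

noncomputable section

/-- The Wirtinger derivative `∂f/∂w = ((∂/∂t) f - i (∂/∂s) f)/2`. -/
def dw (f : ℂ → ℂ) (w : ℂ) : ℂ :=
  (fderiv ℝ f w 1 - Complex.I * fderiv ℝ f w Complex.I) / 2

/-- The Wirtinger derivative `∂f/∂w̄ = ((∂/∂t) f + i (∂/∂s) f)/2`. -/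
def dwbar (f : ℂ → ℂ) (w : ℂ) : ℂ :=
  (fderiv ℝ f w 1 + Complex.I * fderiv ℝ f w Complex.I) / 2

/-- The vector field `W = 2 i s ∂/∂w` acting on functions. -/
def Wop (f : ℂ → ℂ) (w : ℂ) : ℂ := 2 * Complex.I * (w.im : ℂ) * dw f w

/-- The vector field `W̄ = -2 i s ∂/∂w̄` acting on functions. -/
def Wbar (f : ℂ → ℂ) (w : ℂ) : ℂ := -(2 * Complex.I * (w.im : ℂ)) * dwbar f w

/-- The upper half-plane `H² = {w : Im w > 0}` as a subset of `ℂ`. -/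
def UHP : Set ℂ := {w : ℂ | 0 < w.im}

/-- The squared `L²` norm on `D` with respect to the hyperbolic measure `s⁻² dt ds`. -/
def hNormSq (D : Set ℂ) (f : ℂ → ℂ) : ℝ≥0∞ :=
  ∫⁻ w in D, (‖f w‖₊ : ℝ≥0∞) ^ 2 * ENNReal.ofReal ((w.im)⁻¹ ^ 2)

/-- The hyperbolic `L²` inner product `⟨f, g⟩ = ∫_D f ḡ s⁻² dt ds` on `D`. -/
def hInner (D : Set ℂ) (f g : ℂ → ℂ) : ℂ :=
  ∫ w in D, f w * (starRingEnd ℂ) (g w) * ((((w.im)⁻¹ ^ 2 : ℝ)) : ℂ)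

/-- Smooth functions compactly supported in `D`. -/
def IsTestFun (D : Set ℂ) (f : ℂ → ℂ) : Prop :=
  ContDiff ℝ (⊤ : ℕ∞) f ∧ HasCompactSupport f ∧ tsupport f ⊆ D

/-- `u` belongs to `W₀`, the closure of `C_c^∞(D)` in the first-order Sobolev norm
`‖u‖² + ‖Wu‖² + ‖W̄u‖²`, with `Wu`, `Wbu` the induced extensions of `W u` and `W̄ u`. -/
def MemW0 (D : Set ℂ) (u Wu Wbu : ℂ → ℂ) : Prop :=
  AEStronglyMeasurable u (volume.restrict D) ∧
  AEStronglyMeasurable Wu (volume.restrict D) ∧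
  AEStronglyMeasurable Wbu (volume.restrict D) ∧
  ∃ φ : ℕ → ℂ → ℂ, (∀ n, IsTestFun D (φ n)) ∧
    Tendsto (fun n => hNormSq D (fun w => φ n w - u w)) atTop (𝓝 0) ∧
    Tendsto (fun n => hNormSq D (fun w => Wop (φ n) w - Wu w)) atTop (𝓝 0) ∧
    Tendsto (fun n => hNormSq D (fun w => Wbar (φ n) w - Wbu w)) atTop (𝓝 0)

/-- Membership in `L²(D)` with respect to the hyperbolic measure. -/
def HMemL2 (D : Set ℂ) (f : ℂ → ℂ) : Prop :=
  AEStronglyMeasurable f (volume.restrict D) ∧ hNormSq D f < ⊤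


namespace EstimateAux

/-! ### Auxiliary definitions -/

def pfun (β : ℝ) (φ : ℂ → ℂ) (w : ℂ) : ℝ :=
  2*β*((φ w).re * (fderiv ℝ φ w I).im - (φ w).im * (fderiv ℝ φ w I).re)

def qfun2 (β : ℝ) (φ : ℂ → ℂ) (w : ℂ) : ℝ :=
  β*((w.im)⁻¹*((φ w).re*(φ w).re+(φ w).im*(φ w).im))
    - 2*β*((φ w).re * (fderiv ℝ φ w 1).im - (φ w).im * (fderiv ℝ φ w 1).re)

def Qfun (α : ℝ) (φ : ℂ → ℂ) (w : ℂ) : ℝ :=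
  (‖Complex.I * (w.im:ℂ) * fderiv ℝ φ w 1‖^2
    + ‖2*(w.im:ℂ) * fderiv ℝ φ w I - φ w‖^2/4
    - 2*α*((Complex.I * (w.im:ℂ) * fderiv ℝ φ w 1) *
        (starRingEnd ℂ) (2*(w.im:ℂ)*fderiv ℝ φ w I - φ w)).re) * ((w.im)⁻¹^2)

variable {φ : ℂ → ℂ} {β : ℝ}

/-! ### Divergence theorem on `ℂ` for compactly supported `C¹` functions -/

lemma integral_fderiv_eq_zero' {p : ℂ → ℝ} (hp : ContDiff ℝ 1 p)
    (hps : HasCompactSupport p) (v : ℂ) :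
    (∫ x : ℂ, fderiv ℝ p x v) = 0 := by
  have hc : Continuous fun x : ℂ => fderiv ℝ p x v :=
    (hp.continuous_fderiv one_ne_zero).clm_apply continuous_const
  have hcs : HasCompactSupport fun x : ℂ => fderiv ℝ p x v :=
    (hps.fderiv ℝ).comp_left (g := fun L : ℂ →L[ℝ] ℝ => L v) rfl
  have h := integral_mul_fderiv_eq_neg_fderiv_mul_of_integrable (μ := (volume : Measure ℂ))
      (f := fun _ : ℂ => (1:ℝ)) (g := p) (v := v)
      (by simpa using (hc.integrable_of_hasCompactSupport hcs).const_mul 0)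
      (by simpa using hc.integrable_of_hasCompactSupport hcs)
      (by simpa using hp.continuous.integrable_of_hasCompactSupport hps)
      (fun x _ => differentiableAt_const _) (fun x _ => hp.differentiable one_ne_zero x)
  simpa using h

/-! ### Derivative computations -/

lemma hfd_phi (hφ : ContDiff ℝ (⊤ : ℕ∞) φ) (w : ℂ) : HasFDerivAt φ (fderiv ℝ φ w) w :=
  (hφ.differentiable (by simp) w).hasFDerivAt

lemma hfd_dphi (hφ : ContDiff ℝ (⊤ : ℕ∞) φ) (w : ℂ) (v : ℂ) :
    HasFDerivAt (fun y => fderiv ℝ φ y v)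
      ((ContinuousLinearMap.apply ℝ ℂ v).comp (fderiv ℝ (fderiv ℝ φ) w)) w :=
  (ContinuousLinearMap.apply ℝ ℂ v).hasFDerivAt.comp w
    (((hφ.fderiv_right (m := (⊤ : ℕ∞)) (by simp)).differentiable (by simp) w).hasFDerivAt)

lemma hfd_phi_re (hφ : ContDiff ℝ (⊤ : ℕ∞) φ) (w : ℂ) :
    HasFDerivAt (fun y => (φ y).re) (Complex.reCLM.comp (fderiv ℝ φ w)) w :=
  Complex.reCLM.hasFDerivAt.comp w (hfd_phi hφ w)

lemma hfd_phi_im (hφ : ContDiff ℝ (⊤ : ℕ∞) φ) (w : ℂ) :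
    HasFDerivAt (fun y => (φ y).im) (Complex.imCLM.comp (fderiv ℝ φ w)) w :=
  Complex.imCLM.hasFDerivAt.comp w (hfd_phi hφ w)

lemma hfd_dphi_re (hφ : ContDiff ℝ (⊤ : ℕ∞) φ) (w : ℂ) (v : ℂ) :
    HasFDerivAt (fun y => (fderiv ℝ φ y v).re)
      (Complex.reCLM.comp ((ContinuousLinearMap.apply ℝ ℂ v).comp (fderiv ℝ (fderiv ℝ φ) w))) w :=
  Complex.reCLM.hasFDerivAt.comp w (hfd_dphi hφ w v)

lemma hfd_dphi_im (hφ : ContDiff ℝ (⊤ : ℕ∞) φ) (w : ℂ) (v : ℂ) :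
    HasFDerivAt (fun y => (fderiv ℝ φ y v).im)
      (Complex.imCLM.comp ((ContinuousLinearMap.apply ℝ ℂ v).comp (fderiv ℝ (fderiv ℝ φ) w))) w :=
  Complex.imCLM.hasFDerivAt.comp w (hfd_dphi hφ w v)

lemma fderiv_pfun (hφ : ContDiff ℝ (⊤ : ℕ∞) φ) (w : ℂ) :
    fderiv ℝ (pfun β φ) w 1
      = 2*β*((fderiv ℝ φ w 1).re * (fderiv ℝ φ w I).im + (φ w).re * (fderiv ℝ (fderiv ℝ φ) w 1 I).im
           - (fderiv ℝ φ w 1).im * (fderiv ℝ φ w I).re - (φ w).im * (fderiv ℝ (fderiv ℝ φ) w 1 I).re) := by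
  have hp : pfun β φ = fun w => 2*β*((φ w).re * (fderiv ℝ φ w I).im - (φ w).im * (fderiv ℝ φ w I).re) := rfl
  have Hp := (((hfd_phi_re hφ w).mul (hfd_dphi_im hφ w I)).sub
      ((hfd_phi_im hφ w).mul (hfd_dphi_re hφ w I))).const_mul (2*β)
  rw [(show HasFDerivAt (pfun β φ) _ w from Hp).fderiv]
  simp only [ContinuousLinearMap.smul_apply, ContinuousLinearMap.sub_apply,
    ContinuousLinearMap.add_apply, ContinuousLinearMap.comp_apply,
    ContinuousLinearMap.apply_apply, smul_eq_mul, Complex.reCLM_apply, Complex.imCLM_apply]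
  ring

lemma fderiv_qfun2 (hφ : ContDiff ℝ (⊤ : ℕ∞) φ) (w : ℂ) (h : w.im ≠ 0) :
    fderiv ℝ (qfun2 β φ) w I =
      β * (-((w.im)⁻¹*1*(w.im)⁻¹) * ((φ w).re*(φ w).re + (φ w).im*(φ w).im)
           + (w.im)⁻¹ * (2*(φ w).re*(fderiv ℝ φ w I).re + 2*(φ w).im*(fderiv ℝ φ w I).im))
      - 2*β*((fderiv ℝ φ w I).re * (fderiv ℝ φ w 1).im + (φ w).re * (fderiv ℝ (fderiv ℝ φ) w I 1).im
           - (fderiv ℝ φ w I).im * (fderiv ℝ φ w 1).re - (φ w).im * (fderiv ℝ (fderiv ℝ φ) w I 1).re) := by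
  have hq : qfun2 β φ = fun w => β*((w.im)⁻¹*((φ w).re*(φ w).re+(φ w).im*(φ w).im))
    - 2*β*((φ w).re * (fderiv ℝ φ w 1).im - (φ w).im * (fderiv ℝ φ w 1).re) := rfl
  have hinv : HasFDerivAt (fun y : ℂ => (y.im)⁻¹)
      ((-ContinuousLinearMap.mulLeftRight ℝ ℝ (w.im)⁻¹ (w.im)⁻¹).comp Complex.imCLM) w :=
    (hasFDerivAt_inv' (𝕜 := ℝ) h).comp w Complex.imCLM.hasFDerivAt
  have hsq := ((hfd_phi_re hφ w).mul (hfd_phi_re hφ w)).add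
      ((hfd_phi_im hφ w).mul (hfd_phi_im hφ w))
  have Hq := (((hinv.mul hsq).const_mul β).sub
      ((((hfd_phi_re hφ w).mul (hfd_dphi_im hφ w 1)).sub
        ((hfd_phi_im hφ w).mul (hfd_dphi_re hφ w 1))).const_mul (2*β)))
  rw [(show HasFDerivAt (qfun2 β φ) _ w from Hq).fderiv]
  simp only [ContinuousLinearMap.smul_apply, ContinuousLinearMap.sub_apply,
    ContinuousLinearMap.add_apply, ContinuousLinearMap.comp_apply, ContinuousLinearMap.neg_apply,
    ContinuousLinearMap.apply_apply, smul_eq_mul, Complex.reCLM_apply, Complex.imCLM_apply,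
    Complex.I_re, Complex.I_im, ContinuousLinearMap.mulLeftRight_apply, Pi.add_apply, Pi.mul_apply]
  ring

lemma fderiv_zero_off_tsupport {g : ℂ → ℝ}
    (hg : ∀ y, y ∉ tsupport φ → g y = 0) {w : ℂ} (hw : w ∉ tsupport φ) :
    fderiv ℝ g w = 0 := by
  have h : g =ᶠ[𝓝 w] (fun _ => (0:ℝ)) := by
    filter_upwards [(isClosed_tsupport φ).isOpen_compl.mem_nhds hw] with y hy using hg y hy
  rw [h.fderiv_eq]
  exact fderiv_const_apply 0

/-! ### The pointwise identity -/

lemma key_pointwise (α : ℝ) (hφ : ContDiff ℝ (⊤ : ℕ∞) φ) (hsupp : tsupport φ ⊆ UHP) (w : ℂ) :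
    ‖(α:ℂ) * φ w + Wop φ w‖^2 * ((w.im)⁻¹^2)
      = (α+1/2)^2 * (‖φ w‖^2 * ((w.im)⁻¹^2)) + Qfun α φ w
        + (fderiv ℝ (pfun (α+1/2) φ) w 1 + fderiv ℝ (qfun2 (α+1/2) φ) w I) := by
  have hoffφ : ∀ y, y ∉ tsupport φ → φ y = 0 := fun y hy => image_eq_zero_of_notMem_tsupport hy
  have hoffd : ∀ y, y ∉ tsupport φ → fderiv ℝ φ y = 0 := by
    intro y hy
    by_contra h
    exact hy (support_fderiv_subset ℝ (by simpa [Function.mem_support] using h))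
  by_cases h : w.im = 0
  case pos =>
    have hw : w ∉ tsupport φ := fun hmem => by
      have := hsupp hmem
      simp only [UHP, Set.mem_setOf_eq] at this
      linarith
    have h0 : φ w = 0 := hoffφ w hw
    have h1 : fderiv ℝ φ w = 0 := hoffd w hw
    have hp0 : fderiv ℝ (pfun (α+1/2) φ) w = 0 :=
      fderiv_zero_off_tsupport (fun y hy => by simp [pfun, hoffφ y hy, hoffd y hy]) hw
    have hq0 : fderiv ℝ (qfun2 (α+1/2) φ) w = 0 :=
      fderiv_zero_off_tsupport (fun y hy => by simp [qfun2, hoffφ y hy, hoffd y hy]) hw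
    have hp0' : fderiv ℝ (pfun (α+1/2) φ) w 1 = 0 := by rw [hp0]; rfl
    have hq0' : fderiv ℝ (qfun2 (α+1/2) φ) w I = 0 := by rw [hq0]; rfl
    simp only [Qfun, Wop, dw, h0, h1, ContinuousLinearMap.zero_apply, hp0', hq0']
    norm_num
  case neg =>
    rw [fderiv_pfun hφ w, fderiv_qfun2 hφ w h]
    have hsymm : fderiv ℝ (fderiv ℝ φ) w I 1 = fderiv ℝ (fderiv ℝ φ) w 1 I :=
      (second_derivative_symmetric (fun y => hfd_phi hφ y)
        (((hφ.fderiv_right (m := (⊤ : ℕ∞)) (by simp)).differentiable (by simp) w).hasFDerivAt) I 1)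
    rw [hsymm]
    have hW : Wop φ w = Complex.I*(w.im:ℂ)*(fderiv ℝ φ w 1) + (w.im:ℂ)*(fderiv ℝ φ w I) := by
      simp only [Wop, dw]
      linear_combination (-((w.im:ℂ)*(fderiv ℝ φ w I))) * Complex.I_sq
    rw [hW]
    simp only [Qfun, Complex.sq_norm, Complex.normSq_apply,
      Complex.add_re, Complex.add_im, Complex.sub_re, Complex.sub_im, Complex.mul_re,
      Complex.mul_im, Complex.I_re, Complex.I_im, Complex.ofReal_re, Complex.ofReal_im,
      Complex.conj_re, Complex.conj_im, Complex.re_ofNat, Complex.im_ofNat]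
    field_simp
    ring

lemma Qfun_nonneg (α : ℝ) (hα₁ : -(1/2) ≤ α) (hα₂ : α ≤ 1/2) (φ : ℂ → ℂ) (w : ℂ) :
    0 ≤ Qfun α φ w := by
  apply mul_nonneg _ (sq_nonneg _)
  set A := Complex.I * (w.im:ℂ) * fderiv ℝ φ w 1
  set B := 2*(w.im:ℂ) * fderiv ℝ φ w I - φ w
  have habs : |(A * (starRingEnd ℂ) B).re| ≤ ‖A‖ * ‖B‖ := by
    calc |(A * (starRingEnd ℂ) B).re| ≤ ‖A * (starRingEnd ℂ) B‖ :=
          Complex.abs_re_le_norm _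
    _ = ‖A‖ * ‖B‖ := by
          rw [norm_mul, Complex.norm_conj]
  have hg1 : (A * (starRingEnd ℂ) B).re ≤ ‖A‖ * ‖B‖ := (le_abs_self _).trans habs
  have hg2 : -(‖A‖ * ‖B‖) ≤ (A * (starRingEnd ℂ) B).re := by
    have := (neg_abs_le ((A * (starRingEnd ℂ) B).re))
    nlinarith [abs_nonneg ((A * (starRingEnd ℂ) B).re)]
  nlinarith [mul_nonneg (by linarith : (0:ℝ) ≤ 1/2 - α)
      (by linarith : 0 ≤ ‖A‖ * ‖B‖ + (A * (starRingEnd ℂ) B).re),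
    mul_nonneg (by linarith : (0:ℝ) ≤ 1/2 + α)
      (by linarith : 0 ≤ ‖A‖ * ‖B‖ - (A * (starRingEnd ℂ) B).re),
    sq_nonneg (‖A‖ - ‖B‖/2)]

/-! ### Continuity helpers -/

lemma continuous_patch {f : ℂ → ℝ} {K : Set ℂ} (hK : IsClosed K) (hKU : K ⊆ UHP)
    (h0 : ∀ w, w ∉ K → f w = 0) (h1 : ∀ w : ℂ, w.im ≠ 0 → ContinuousAt f w) :
    Continuous f := by
  rw [continuous_iff_continuousAt]
  intro w
  by_cases h : w.im = 0
  · have hw : w ∉ K := by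
      intro hmem
      have := hKU hmem
      simp only [UHP, Set.mem_setOf_eq] at this
      linarith
    exact continuousAt_const.congr (by
      filter_upwards [hK.isOpen_compl.mem_nhds hw] with y hy using (h0 y hy).symm)
  · exact h1 w h

lemma continuous_Wop (hφ : ContDiff ℝ (⊤ : ℕ∞) φ) : Continuous (Wop φ) := by
  have hfd : Continuous (fderiv ℝ φ) := hφ.continuous_fderiv (by simp)
  have h1 : Continuous fun w : ℂ => fderiv ℝ φ w 1 := hfd.clm_apply continuous_const
  have hI : Continuous fun w : ℂ => fderiv ℝ φ w I := hfd.clm_apply continuous_const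
  have : Continuous (dw φ) := ((h1.sub (continuous_const.mul hI)).div_const 2)
  exact (continuous_const.mul (Complex.continuous_ofReal.comp Complex.continuous_im)).mul this

/-! ### The integral inequality for test functions -/

lemma testfun_integral_ineq {D : Set ℂ} (hDU : D ⊆ UHP) (α : ℝ)
    (hα₁ : -(1/2) ≤ α) (hα₂ : α ≤ 1/2)
    (hφ : ContDiff ℝ (⊤ : ℕ∞) φ) (hcs : HasCompactSupport φ) (hts : tsupport φ ⊆ D) :
    (α+1/2)^2 * (∫ w : ℂ, ‖φ w‖^2 * ((w.im)⁻¹^2))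
      ≤ ∫ w : ℂ, ‖(α:ℂ)*φ w + Wop φ w‖^2 * ((w.im)⁻¹^2) := by
  set β := α + 1/2 with hβ
  have hKU : tsupport φ ⊆ UHP := hts.trans hDU
  have hKc : IsClosed (tsupport φ) := isClosed_tsupport φ
  have hoffφ : ∀ y, y ∉ tsupport φ → φ y = 0 := fun y hy => image_eq_zero_of_notMem_tsupport hy
  have hoffd : ∀ y, y ∉ tsupport φ → fderiv ℝ φ y = 0 := by
    intro y hy
    by_contra h
    exact hy (support_fderiv_subset ℝ (by simpa [Function.mem_support] using h))
  have hoffW : ∀ y, y ∉ tsupport φ → Wop φ y = 0 := by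
    intro y hy
    simp [Wop, dw, hoffd y hy]
  have hfd : Continuous (fderiv ℝ φ) := hφ.continuous_fderiv (by simp)
  have hd1 : Continuous fun w : ℂ => fderiv ℝ φ w 1 := hfd.clm_apply continuous_const
  have hdI : Continuous fun w : ℂ => fderiv ℝ φ w I := hfd.clm_apply continuous_const
  have hfd2 : Continuous (fderiv ℝ (fderiv ℝ φ)) :=
    (hφ.fderiv_right (m := (⊤ : ℕ∞)) (by simp)).continuous_fderiv (by simp)
  have hWc : Continuous (Wop φ) := continuous_Wop hφ
  -- the three main integrands
  set F0 : ℂ → ℝ := fun w => ‖φ w‖^2 * ((w.im)⁻¹^2) with hF0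
  set F1 : ℂ → ℝ := fun w => ‖(α:ℂ)*φ w + Wop φ w‖^2 * ((w.im)⁻¹^2) with hF1
  have hinvCA : ∀ w : ℂ, w.im ≠ 0 → ContinuousAt (fun y : ℂ => ((y.im)⁻¹)^2) w := fun w h =>
    ((Complex.continuous_im.continuousAt.inv₀ h).pow 2)
  have hF0c : Continuous F0 := by
    apply continuous_patch hKc hKU
    · intro w hw; simp [hF0, hoffφ w hw]
    · intro w h
      exact ((hφ.continuous.norm.pow 2).continuousAt).mul (hinvCA w h)
  have hF1c : Continuous F1 := by
    apply continuous_patch hKc hKU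
    · intro w hw; simp [hF1, hoffφ w hw, hoffW w hw]
    · intro w h
      exact ((((continuous_const.mul hφ.continuous).add hWc).norm.pow 2).continuousAt).mul
        (hinvCA w h)
  have hQc : Continuous (Qfun α φ) := by
    apply continuous_patch hKc hKU
    · intro w hw
      simp [Qfun, hoffφ w hw, (by rw [hoffd w hw]; rfl : fderiv ℝ φ w 1 = 0),
        (by rw [hoffd w hw]; rfl : fderiv ℝ φ w I = 0)]
    · intro w h
      have hA : Continuous fun w : ℂ => Complex.I * (w.im:ℂ) * fderiv ℝ φ w 1 :=
        (continuous_const.mul (Complex.continuous_ofReal.comp Complex.continuous_im)).mul hd1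
      have hB : Continuous fun w : ℂ => 2*(w.im:ℂ) * fderiv ℝ φ w I - φ w :=
        ((continuous_const.mul (Complex.continuous_ofReal.comp Complex.continuous_im)).mul
          hdI).sub hφ.continuous
      exact ((((hA.norm.pow 2).add ((hB.norm.pow 2).div_const 4)).sub
        (continuous_const.mul (Complex.continuous_re.comp (hA.mul
          (Complex.continuous_conj.comp hB))))).continuousAt).mul (hinvCA w h)
  -- supports
  have hF0s : HasCompactSupport F0 := HasCompactSupport.intro hcs (fun w hw => by
    simp [hF0, hoffφ w hw])
  have hF1s : HasCompactSupport F1 := HasCompactSupport.intro hcs (fun w hw => by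
    simp [hF1, hoffφ w hw, hoffW w hw])
  have hQs : HasCompactSupport (Qfun α φ) := HasCompactSupport.intro hcs (fun w hw => by
    simp [Qfun, hoffφ w hw, (by rw [hoffd w hw]; rfl : fderiv ℝ φ w 1 = 0),
      (by rw [hoffd w hw]; rfl : fderiv ℝ φ w I = 0)])
  -- integrability
  have hF0i : Integrable F0 := hF0c.integrable_of_hasCompactSupport hF0s
  have hF1i : Integrable F1 := hF1c.integrable_of_hasCompactSupport hF1s
  have hQi : Integrable (Qfun α φ) := hQc.integrable_of_hasCompactSupport hQs
  -- the divergence terms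
  set dP : ℂ → ℝ := fun w => fderiv ℝ (pfun β φ) w 1 with hdP
  set dQ : ℂ → ℝ := fun w => fderiv ℝ (qfun2 β φ) w I with hdQ
  have hkey : ∀ w : ℂ, F1 w = β^2 * F0 w + Qfun α φ w + (dP w + dQ w) := fun w =>
    key_pointwise α hφ hKU w
  -- dP is continuous with compact support
  have hdPoff : ∀ y, y ∉ tsupport φ → dP y = 0 := by
    intro y hy
    have h := fderiv_zero_off_tsupport (φ := φ) (g := pfun β φ)
      (fun z hz => by
        simp only [pfun, hoffφ z hz, hoffd z hz, ContinuousLinearMap.zero_apply]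
        ring) hy
    show fderiv ℝ (pfun β φ) y 1 = 0
    rw [h]; rfl
  have hdPc : Continuous dP := by
    have : dP = fun w =>
        2*β*((fderiv ℝ φ w 1).re * (fderiv ℝ φ w I).im
          + (φ w).re * (fderiv ℝ (fderiv ℝ φ) w 1 I).im
          - (fderiv ℝ φ w 1).im * (fderiv ℝ φ w I).re
          - (φ w).im * (fderiv ℝ (fderiv ℝ φ) w 1 I).re) := funext (fun w => fderiv_pfun hφ w)
    rw [this]
    have h2 : Continuous fun w : ℂ => fderiv ℝ (fderiv ℝ φ) w 1 I :=
      (hfd2.clm_apply continuous_const).clm_apply continuous_const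
    have hre : Continuous fun w : ℂ => (φ w).re := Complex.continuous_re.comp hφ.continuous
    have him : Continuous fun w : ℂ => (φ w).im := Complex.continuous_im.comp hφ.continuous
    exact continuous_const.mul ((((Complex.continuous_re.comp hd1).mul
        (Complex.continuous_im.comp hdI)).add
        (hre.mul (Complex.continuous_im.comp h2))).sub
        ((Complex.continuous_im.comp hd1).mul (Complex.continuous_re.comp hdI)) |>.sub
        (him.mul (Complex.continuous_re.comp h2)))
  have hdPs : HasCompactSupport dP := HasCompactSupport.intro hcs hdPoff
  have hdPi : Integrable dP := hdPc.integrable_of_hasCompactSupport hdPs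
  -- dQ = F1 - β² F0 - Q - dP is continuous with compact support
  have hdQeq : dQ = fun w => F1 w - β^2 * F0 w - Qfun α φ w - dP w := by
    funext w
    have := hkey w
    linarith [this]
  have hdQc : Continuous dQ := by
    rw [hdQeq]
    exact ((hF1c.sub (continuous_const.mul hF0c)).sub hQc).sub hdPc
  have hdQs : HasCompactSupport dQ := by
    rw [hdQeq]
    apply HasCompactSupport.intro hcs
    intro w hw
    have h1 : F1 w = 0 := by simp [hF1, hoffφ w hw, hoffW w hw]
    have h0 : F0 w = 0 := by simp [hF0, hoffφ w hw]
    have hq : Qfun α φ w = 0 := by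
      simp [Qfun, hoffφ w hw, (by rw [hoffd w hw]; rfl : fderiv ℝ φ w 1 = 0),
        (by rw [hoffd w hw]; rfl : fderiv ℝ φ w I = 0)]
    simp [h1, h0, hq, hdPoff w hw]
  have hdQi : Integrable dQ := hdQc.integrable_of_hasCompactSupport hdQs
  -- smoothness of pfun and qfun2
  have hφ1 : ContDiff ℝ (1:ℕ∞) φ := hφ.of_le (by simp)
  have hd1' : ContDiff ℝ (1:ℕ∞) fun w : ℂ => fderiv ℝ φ w 1 :=
    (hφ.fderiv_right (m := (⊤ : ℕ∞)) (by simp)).of_le (by simp) |>.clm_apply contDiff_const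
  have hdI' : ContDiff ℝ (1:ℕ∞) fun w : ℂ => fderiv ℝ φ w I :=
    (hφ.fderiv_right (m := (⊤ : ℕ∞)) (by simp)).of_le (by simp) |>.clm_apply contDiff_const
  have hre : ContDiff ℝ (1:ℕ∞) fun w : ℂ => (φ w).re :=
    Complex.reCLM.contDiff.comp hφ1
  have him : ContDiff ℝ (1:ℕ∞) fun w : ℂ => (φ w).im :=
    Complex.imCLM.contDiff.comp hφ1
  have hpfun_smooth : ContDiff ℝ (1:ℕ∞) (pfun β φ) := by
    have : pfun β φ = fun w =>
        2*β*((φ w).re * (fderiv ℝ φ w I).im - (φ w).im * (fderiv ℝ φ w I).re) := rfl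
    rw [this]
    exact contDiff_const.mul ((hre.mul (Complex.imCLM.contDiff.comp hdI')).sub
      (him.mul (Complex.reCLM.contDiff.comp hdI')))
  have hqfun_smooth : ContDiff ℝ (1:ℕ∞) (qfun2 β φ) := by
    rw [contDiff_iff_contDiffAt]
    intro w
    by_cases h : w.im = 0
    · have hw : w ∉ tsupport φ := by
        intro hmem
        have := hKU hmem
        simp only [UHP, Set.mem_setOf_eq] at this
        linarith
      apply ContDiffAt.congr_of_eventuallyEq (contDiffAt_const (c := (0:ℝ)))
      filter_upwards [hKc.isOpen_compl.mem_nhds hw] with y hy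
      simp [qfun2, hoffφ y hy, (by rw [hoffd y hy]; rfl : fderiv ℝ φ y 1 = 0),
        (by rw [hoffd y hy]; rfl : fderiv ℝ φ y I = 0)]
    · have hinv : ContDiffAt ℝ (1:ℕ∞) (fun y : ℂ => (y.im)⁻¹) w :=
        (Complex.imCLM.contDiff.contDiffAt (n := (1:ℕ∞))).inv h
      exact ((contDiffAt_const.mul ((hinv.mul
          (((hre.mul hre).add (him.mul him)).contDiffAt)))).sub
        (contDiffAt_const.mul (((hre.mul (Complex.imCLM.contDiff.comp hd1')).sub
          (him.mul (Complex.reCLM.contDiff.comp hd1'))).contDiffAt)))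
  have hpfun_supp : HasCompactSupport (pfun β φ) := HasCompactSupport.intro hcs
    (fun w hw => by simp [pfun, hoffφ w hw, hoffd w hw])
  have hqfun_supp : HasCompactSupport (qfun2 β φ) := HasCompactSupport.intro hcs
    (fun w hw => by simp [qfun2, hoffφ w hw,
      (by rw [hoffd w hw]; rfl : fderiv ℝ φ w 1 = 0),
      (by rw [hoffd w hw]; rfl : fderiv ℝ φ w I = 0)])
  have hintP : (∫ w : ℂ, dP w) = 0 := integral_fderiv_eq_zero' hpfun_smooth hpfun_supp 1
  have hintQ2 : (∫ w : ℂ, dQ w) = 0 := integral_fderiv_eq_zero' hqfun_smooth hqfun_supp I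
  -- put together
  have hsplit : (∫ w : ℂ, F1 w)
      = β^2 * (∫ w : ℂ, F0 w) + (∫ w : ℂ, Qfun α φ w) + ((∫ w : ℂ, dP w) + (∫ w : ℂ, dQ w)) := by
    have hcongr : (∫ w : ℂ, F1 w)
        = ∫ w : ℂ, (β^2 * F0 w + Qfun α φ w + (dP w + dQ w)) :=
      integral_congr_ae (Filter.Eventually.of_forall (fun w => hkey w))
    rw [hcongr,
      integral_add (f := fun w => β^2 * F0 w + Qfun α φ w) (g := fun w => dP w + dQ w)
        ((hF0i.const_mul _).add hQi) (hdPi.add hdQi),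
      integral_add (f := fun w => β^2 * F0 w) (g := fun w => Qfun α φ w)
        (hF0i.const_mul _) hQi,
      integral_add (f := dP) (g := dQ) hdPi hdQi, integral_const_mul]
  have hQnn : 0 ≤ ∫ w : ℂ, Qfun α φ w :=
    integral_nonneg (fun w => Qfun_nonneg α hα₁ hα₂ φ w)
  calc β^2 * (∫ w : ℂ, F0 w) ≤ β^2 * (∫ w : ℂ, F0 w) + (∫ w : ℂ, Qfun α φ w) := by linarith
  _ = ∫ w : ℂ, F1 w := by rw [hsplit, hintP, hintQ2]; ring


/-! ### Measure-theoretic bridge -/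

lemma integrable_weighted {f : ℂ → ℂ} {K : Set ℂ} (hK : IsCompact K) (hKc : IsClosed K)
    (hKU : K ⊆ UHP) (hf : Continuous f) (hoff : ∀ w, w ∉ K → f w = 0) :
    Integrable (fun w : ℂ => ‖f w‖^2 * ((w.im)⁻¹^2)) volume := by
  have hc : Continuous fun w : ℂ => ‖f w‖^2 * ((w.im)⁻¹^2) := by
    apply continuous_patch hKc hKU
    · intro w hw; simp [hoff w hw]
    · intro w h
      exact ((hf.norm.pow 2).continuousAt).mul ((Complex.continuous_im.continuousAt.inv₀ h).pow 2)
  exact hc.integrable_of_hasCompactSupport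
    (HasCompactSupport.intro hK (fun w hw => by simp [hoff w hw]))

lemma hNormSq_eq_ofReal {D : Set ℂ} {f : ℂ → ℂ}
    (hsupp : Function.support f ⊆ D)
    (hint : Integrable (fun w : ℂ => ‖f w‖^2 * ((w.im)⁻¹^2)) volume) :
    hNormSq D f = ENNReal.ofReal (∫ w : ℂ, ‖f w‖^2 * ((w.im)⁻¹^2)) := by
  unfold hNormSq
  have h1 : ∀ w : ℂ, (‖f w‖₊ : ℝ≥0∞)^2 * ENNReal.ofReal ((w.im)⁻¹^2)
      = ENNReal.ofReal (‖f w‖^2 * ((w.im)⁻¹^2)) := by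
    intro w
    rw [← ENNReal.ofReal_coe_nnreal, coe_nnnorm, ← ENNReal.ofReal_pow (norm_nonneg _),
      ← ENNReal.ofReal_mul (by positivity)]
  rw [lintegral_congr h1]
  rw [setLIntegral_eq_of_support_subset]
  · rw [← ofReal_integral_eq_lintegral_ofReal hint
      (Filter.Eventually.of_forall (fun w => by positivity))]
  · intro w hw
    simp only [Function.mem_support] at hw
    apply hsupp
    simp only [Function.mem_support]
    intro h0
    apply hw
    rw [h0]
    simp

lemma testfun_hNormSq {D : Set ℂ} (hDU : D ⊆ UHP) (α : ℝ)
    (hα₁ : -(1/2) ≤ α) (hα₂ : α ≤ 1/2)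
    (hφ : ContDiff ℝ (⊤ : ℕ∞) φ) (hcs : HasCompactSupport φ) (hts : tsupport φ ⊆ D) :
    ENNReal.ofReal ((α+1/2)^2) * hNormSq D φ
      ≤ hNormSq D (fun w => (α:ℂ)*φ w + Wop φ w) := by
  have hKU : tsupport φ ⊆ UHP := hts.trans hDU
  have hKc : IsClosed (tsupport φ) := isClosed_tsupport φ
  have hoffφ : ∀ y, y ∉ tsupport φ → φ y = 0 := fun y hy => image_eq_zero_of_notMem_tsupport hy
  have hoffd : ∀ y, y ∉ tsupport φ → fderiv ℝ φ y = 0 := by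
    intro y hy
    by_contra h
    exact hy (support_fderiv_subset ℝ (by simpa [Function.mem_support] using h))
  have hoffW : ∀ y, y ∉ tsupport φ → Wop φ y = 0 := by
    intro y hy
    simp [Wop, dw, hoffd y hy]
  have hint0 : Integrable (fun w : ℂ => ‖φ w‖^2 * ((w.im)⁻¹^2)) volume :=
    integrable_weighted hcs hKc hKU hφ.continuous hoffφ
  have hint1 : Integrable (fun w : ℂ => ‖(α:ℂ)*φ w + Wop φ w‖^2 * ((w.im)⁻¹^2)) volume :=
    integrable_weighted hcs hKc hKU ((continuous_const.mul hφ.continuous).add (continuous_Wop hφ))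
      (fun w hw => by simp [hoffφ w hw, hoffW w hw])
  rw [hNormSq_eq_ofReal ((Function.support_subset_iff'.2 hoffφ).trans hts) hint0,
    hNormSq_eq_ofReal (f := fun w => (α:ℂ)*φ w + Wop φ w)
      ((Function.support_subset_iff'.2 (fun w hw => by simp [hoffφ w hw, hoffW w hw])).trans hts)
      hint1,
    ← ENNReal.ofReal_mul (by positivity)]
  exact ENNReal.ofReal_le_ofReal (testfun_integral_ineq hDU α hα₁ hα₂ hφ hcs hts)

def nu (D : Set ℂ) : Measure ℂ :=
  (volume.restrict D).withDensity (fun w => ENNReal.ofReal ((w.im)⁻¹^2))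

lemma hNormSq_eq_eLpNorm (D : Set ℂ) (f : ℂ → ℂ) :
    hNormSq D f = (eLpNorm f 2 (nu D))^2 := by
  have hmeas : Measurable fun w : ℂ => ENNReal.ofReal ((w.im)⁻¹^2) :=
    ((Complex.measurable_im.inv).pow_const 2).ennreal_ofReal
  rw [eLpNorm_eq_lintegral_rpow_enorm_toReal (by norm_num) (by norm_num),
    ← ENNReal.rpow_natCast _ 2, ← ENNReal.rpow_mul]
  rw [nu, lintegral_withDensity_eq_lintegral_mul_non_measurable _ hmeas
    (Filter.Eventually.of_forall fun x => ENNReal.ofReal_lt_top)]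
  norm_num
  unfold hNormSq
  apply lintegral_congr
  intro a
  rw [mul_comm, inv_pow]; rfl

lemma ennreal_le_of_sq_le {x y : ℝ≥0∞} (h : x^2 ≤ y^2) : x ≤ y := by
  by_contra hlt
  push_neg at hlt
  exact absurd h (not_le.mpr (ENNReal.pow_lt_pow_left two_ne_zero hlt))

lemma tendsto_of_sq_tendsto {f : ℕ → ℝ≥0∞} (h : Tendsto (fun n => (f n)^2) atTop (𝓝 0)) :
    Tendsto f atTop (𝓝 0) := by
  rw [ENNReal.tendsto_nhds_zero] at h ⊢
  intro ε hε
  filter_upwards [h (ε^2) (ENNReal.pow_pos hε 2)] with n hn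
  exact ennreal_le_of_sq_le hn

end EstimateAux


/-- if `-1/2 ≤ α ≤ 1/2` then `(α+1/2)² ‖u‖² ≤ ‖(α+W)u‖²` for all `u ∈ W₀`. -/
theorem estimate_alpha_middle (D : Set ℂ) (hD : IsOpen D) (hDU : D ⊆ UHP)
    (hbd : Bornology.IsBounded D) (α : ℝ) (hα₁ : -(1 / 2) ≤ α) (hα₂ : α ≤ 1 / 2)
    (u Wu Wbu : ℂ → ℂ) (hu : MemW0 D u Wu Wbu) :
    ENNReal.ofReal ((α + 1 / 2) ^ 2) * hNormSq D u
      ≤ hNormSq D (fun w => (α : ℂ) * u w + Wu w) := by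
  classical
  obtain ⟨hum, hWum, hbum, φs, hφs, hcu, hcW, hcWb⟩ := hu
  have hβ0 : (0:ℝ) ≤ α + 1/2 := by linarith
  set ν := EstimateAux.nu D with hν
  set b := ENNReal.ofReal (α + 1/2) with hb
  have hbne : b ≠ ⊤ := ENNReal.ofReal_ne_top
  set N : (ℂ → ℂ) → ℝ≥0∞ := fun f => eLpNorm f 2 ν with hN
  have hNsq : ∀ f : ℂ → ℂ, hNormSq D f = (N f)^2 := fun f => EstimateAux.hNormSq_eq_eLpNorm D f
  set v : ℂ → ℂ := fun w => (α:ℂ) * u w + Wu w with hv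
  rw [hNsq u, hNsq v, show ENNReal.ofReal ((α+1/2)^2) = b^2 by
    rw [hb, ENNReal.ofReal_pow hβ0], ← mul_pow]
  apply pow_le_pow_left' (?_ : b * N u ≤ N v)
  -- measurability
  have hac : ν ≪ volume.restrict D := withDensity_absolutelyContinuous _ _
  have hums : AEStronglyMeasurable u ν := hum.mono_ac hac
  have hWums : AEStronglyMeasurable Wu ν := hWum.mono_ac hac
  have hvms : AEStronglyMeasurable v ν := (hums.const_mul _).add hWums
  have hφsm : ∀ n, AEStronglyMeasurable (φs n) ν := fun n =>
    ((hφs n).1.continuous).aestronglyMeasurable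
  set dn : ℕ → ℂ → ℂ := fun n w => φs n w - u w with hdn
  set en : ℕ → ℂ → ℂ := fun n w => Wop (φs n) w - Wu w with hen
  have hdnm : ∀ n, AEStronglyMeasurable (dn n) ν := fun n => (hφsm n).sub hums
  have henm : ∀ n, AEStronglyMeasurable (en n) ν := fun n =>
    ((EstimateAux.continuous_Wop (hφs n).1).aestronglyMeasurable).sub hWums
  have hdn0 : Tendsto (fun n => N (dn n)) atTop (𝓝 0) := by
    apply EstimateAux.tendsto_of_sq_tendsto
    have : (fun n => (N (dn n))^2) = fun n => hNormSq D (dn n) := funext fun n => (hNsq _).symm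
    rw [this]
    exact hcu
  have hen0 : Tendsto (fun n => N (en n)) atTop (𝓝 0) := by
    apply EstimateAux.tendsto_of_sq_tendsto
    have : (fun n => (N (en n))^2) = fun n => hNormSq D (en n) := funext fun n => (hNsq _).symm
    rw [this]
    exact hcW
  have hkey : ∀ n, b * N (φs n) ≤ N (fun w => (α:ℂ)*φs n w + Wop (φs n) w) := by
    intro n
    apply EstimateAux.ennreal_le_of_sq_le
    calc (b * N (φs n))^2 = ENNReal.ofReal ((α+1/2)^2) * hNormSq D (φs n) := by
          rw [mul_pow, hNsq, hb, ENNReal.ofReal_pow hβ0]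
    _ ≤ hNormSq D (fun w => (α:ℂ)*φs n w + Wop (φs n) w) :=
          EstimateAux.testfun_hNormSq hDU α hα₁ hα₂ (hφs n).1 (hφs n).2.1 (hφs n).2.2
    _ = (N (fun w => (α:ℂ)*φs n w + Wop (φs n) w))^2 := hNsq _
  have hchain : ∀ n, b * N u
      ≤ N v + (b * N (dn n) + ((‖(α:ℂ)‖₊ : ℝ≥0∞) * N (dn n) + N (en n))) := by
    intro n
    have h1 : N u ≤ N (φs n) + N (dn n) := by
      have hu_eq : u = fun w => φs n w + -(dn n w) := funext fun w => by
        simp [hdn]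
      calc N u = N (fun w => φs n w + -(dn n w)) := by rw [← hu_eq]
      _ ≤ N (φs n) + N (fun w => -(dn n w)) :=
            eLpNorm_add_le (hφsm n) ((hdnm n).neg) one_le_two
      _ = N (φs n) + N (dn n) := by
            rw [show (fun w => -(dn n w)) = -(dn n) from rfl]
            exact congrArg (N (φs n) + ·) (eLpNorm_neg (f := dn n) (p := 2) (μ := ν))
    have h2 : N (fun w => (α:ℂ)*φs n w + Wop (φs n) w)
        ≤ N v + ((‖(α:ℂ)‖₊ : ℝ≥0∞) * N (dn n) + N (en n)) := by
      have heq : (fun w => (α:ℂ)*φs n w + Wop (φs n) w)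
          = fun w => v w + ((α:ℂ) * dn n w + en n w) := funext fun w => by
        simp only [hv, hdn, hen]
        ring
      calc N (fun w => (α:ℂ)*φs n w + Wop (φs n) w)
          = N (fun w => v w + ((α:ℂ) * dn n w + en n w)) := by rw [← heq]
      _ ≤ N v + N (fun w => (α:ℂ) * dn n w + en n w) :=
            eLpNorm_add_le hvms (((hdnm n).const_mul _).add (henm n)) one_le_two
      _ ≤ N v + (N (fun w => (α:ℂ) * dn n w) + N (en n)) :=
            add_le_add_right (eLpNorm_add_le ((hdnm n).const_mul _) (henm n) one_le_two) _
      _ = N v + ((‖(α:ℂ)‖₊ : ℝ≥0∞) * N (dn n) + N (en n)) := by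
            rw [show (fun w => (α:ℂ) * dn n w) = (α:ℂ) • dn n from rfl]
            exact congrArg (fun z => N v + (z + N (en n)))
              (eLpNorm_const_smul (α:ℂ) (dn n) 2 ν)
    calc b * N u ≤ b * (N (φs n) + N (dn n)) := mul_le_mul_right h1 b
    _ = b * N (φs n) + b * N (dn n) := mul_add b _ _
    _ ≤ N (fun w => (α:ℂ)*φs n w + Wop (φs n) w) + b * N (dn n) :=
          add_le_add_left (hkey n) _
    _ ≤ (N v + ((‖(α:ℂ)‖₊ : ℝ≥0∞) * N (dn n) + N (en n))) + b * N (dn n) :=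
          add_le_add_left h2 _
    _ = N v + (b * N (dn n) + ((‖(α:ℂ)‖₊ : ℝ≥0∞) * N (dn n) + N (en n))) := by ring
  have hc0 : Tendsto (fun n => b * N (dn n)
      + ((‖(α:ℂ)‖₊ : ℝ≥0∞) * N (dn n) + N (en n))) atTop (𝓝 0) := by
    have t1 : Tendsto (fun n => b * N (dn n)) atTop (𝓝 0) := by
      simpa using ENNReal.Tendsto.const_mul hdn0 (Or.inr hbne)
    have t2 : Tendsto (fun n => (‖(α:ℂ)‖₊ : ℝ≥0∞) * N (dn n)) atTop (𝓝 0) := by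
      simpa using ENNReal.Tendsto.const_mul hdn0 (Or.inr ENNReal.coe_ne_top)
    simpa using t1.add (t2.add hen0)
  have hlim : Tendsto (fun n => N v + (b * N (dn n)
      + ((‖(α:ℂ)‖₊ : ℝ≥0∞) * N (dn n) + N (en n)))) atTop (𝓝 (N v)) := by
    simpa using tendsto_const_nhds.add hc0
  exact ge_of_tendsto hlim (Filter.Eventually.of_forall hchain)
end
end

section
/- Let D be a precompact smooth domain in the upper half-plane and α ∈ ℝ. Then the kernel of the unbounded operator W̄ + α on L²(D) is infinite dimensional. -/
open MeasureTheory Complex Filter Topology Metric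
open scoped ENNReal NNReal InnerProductSpace

noncomputable section

namespace KernelWbarAux

def myF (r : ℝ) (n : ℕ) (w : ℂ) : ℂ := ((w.im ^ r : ℝ) : ℂ) * w ^ n

lemma myF_hasFDerivAt (r : ℝ) (n : ℕ) (w : ℂ) (hw : 0 < w.im) :
    HasFDerivAt (myF r n)
      ((((w.im ^ r : ℝ) : ℂ)) • ((ContinuousLinearMap.smulRight (1 : ℂ →L[ℂ] ℂ) ((n : ℂ) * w ^ (n - 1))).restrictScalars ℝ)
        + (w ^ n) • (Complex.ofRealCLM.comp ((r * w.im ^ (r - 1)) • Complex.imCLM))) w := by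
  have h1 : HasFDerivAt (fun z : ℂ => ((z.im ^ r : ℝ) : ℂ))
      (Complex.ofRealCLM.comp ((r * w.im ^ (r - 1)) • Complex.imCLM)) w := by
    have him : HasFDerivAt (fun z : ℂ => z.im) Complex.imCLM w := Complex.imCLM.hasFDerivAt
    have hr : HasDerivAt (fun x : ℝ => x ^ r) (r * w.im ^ (r - 1)) w.im :=
      Real.hasDerivAt_rpow_const (Or.inl hw.ne')
    exact Complex.ofRealCLM.hasFDerivAt.comp w (hr.comp_hasFDerivAt w him)
  have h2 : HasFDerivAt (fun z : ℂ => z ^ n)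
      ((ContinuousLinearMap.smulRight (1 : ℂ →L[ℂ] ℂ) ((n : ℂ) * w ^ (n - 1))).restrictScalars ℝ) w :=
    ((hasDerivAt_pow n w).hasFDerivAt).restrictScalars ℝ
  exact h1.mul h2

lemma myF_fderiv_apply (r : ℝ) (n : ℕ) (w : ℂ) (hw : 0 < w.im) (v : ℂ) :
    fderiv ℝ (myF r n) w v
      = ((w.im ^ r : ℝ) : ℂ) * (v * ((n : ℂ) * w ^ (n - 1)))
        + w ^ n * ((r * w.im ^ (r - 1) * v.im : ℝ) : ℂ) := by
  rw [(myF_hasFDerivAt r n w hw).fderiv]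
  simp [ContinuousLinearMap.smul_apply, smul_eq_mul, mul_comm, mul_assoc]

lemma myF_dwbar (r : ℝ) (n : ℕ) (w : ℂ) (hw : 0 < w.im) :
    dwbar (myF r n) w = Complex.I * ((r * w.im ^ (r - 1) : ℝ) : ℂ) * w ^ n / 2 := by
  rw [dwbar, myF_fderiv_apply r n w hw, myF_fderiv_apply r n w hw]
  simp only [Complex.one_im, Complex.I_im, mul_zero, mul_one, Complex.ofReal_zero, zero_mul]
  push_cast
  ring_nf
  simp [Complex.I_sq]

lemma myF_Wbar (r : ℝ) (n : ℕ) (w : ℂ) (hw : 0 < w.im) :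
    Wbar (myF r n) w = (r : ℂ) * myF r n w := by
  rw [Wbar, myF_dwbar r n w hw, myF]
  have hs : ((w.im : ℂ)) * ((w.im ^ (r - 1) : ℝ) : ℂ) = ((w.im ^ r : ℝ) : ℂ) := by
    rw [← Complex.ofReal_mul]
    congr 1
    have h := (Real.rpow_add hw 1 (r - 1)).symm
    rw [show (1:ℝ) + (r - 1) = r by ring] at h
    simpa [Real.rpow_one] using h
  rw [← hs]
  push_cast
  ring_nf
  simp [Complex.I_sq]

end KernelWbarAux

/-- on a precompact smooth domain `D` in the upper half-plane, the kernel of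
the unbounded operator `W̄ + α` on `L²(D)` is infinite dimensional: there is a linearly
independent sequence of `L²` solutions of `(W̄ + α)u = 0` on `D`. -/
theorem kernel_Wbar_plus_alpha_infinite_dimensional (D : Set ℂ) (hD : IsOpen D)
    (hne : D.Nonempty) (hDU : D ⊆ UHP) (hcpt : IsCompact (closure D))
    (hcl : closure D ⊆ UHP) (α : ℝ) :
    ∃ f : ℕ → ℂ → ℂ,
      (∀ n, HMemL2 D (f n) ∧ (∀ w ∈ D, DifferentiableAt ℝ (f n) w) ∧
        ∀ w ∈ D, Wbar (f n) w + (α : ℂ) * f n w = 0) ∧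
      LinearIndependent ℂ (fun n : ℕ => D.restrict (f n)) := by
  classical
  set r : ℝ := -α with hr
  refine ⟨fun n => KernelWbarAux.myF r n, fun n => ⟨?_, ?_, ?_⟩, ?_⟩
  · -- HMemL2
    constructor
    · exact (ContinuousOn.aestronglyMeasurable (fun w hw =>
        ((KernelWbarAux.myF_hasFDerivAt r n w (hDU hw)).differentiableAt.continuousAt.continuousWithinAt))
        hD.measurableSet)
    · -- finiteness
      have hcont : ContinuousOn (fun w : ℂ => ‖KernelWbarAux.myF r n w‖) (closure D) := by
        intro w hw
        exact ((KernelWbarAux.myF_hasFDerivAt r n w (hcl hw)).differentiableAt.continuousAt.norm).continuousWithinAt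
      obtain ⟨C, hC⟩ := hcpt.exists_bound_of_continuousOn hcont
      -- minimum of im on closure D
      obtain ⟨w₀, hw₀D⟩ := hne
      have hclne : (closure D).Nonempty := ⟨w₀, subset_closure hw₀D⟩
      obtain ⟨wm, hwm, hmin⟩ := hcpt.exists_isMinOn hclne (Complex.continuous_im.continuousOn)
      set ε : ℝ := wm.im with hε
      have hεpos : 0 < ε := hcl hwm
      have hbound : ∀ w ∈ D, (‖KernelWbarAux.myF r n w‖₊ : ℝ≥0∞) ^ 2 * ENNReal.ofReal ((w.im)⁻¹ ^ 2)
          ≤ ENNReal.ofReal (C ^ 2 * (ε⁻¹) ^ 2) := by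
        intro w hw
        have h1 : ‖KernelWbarAux.myF r n w‖ ≤ C := by simpa using hC w (subset_closure hw)
        have h2 : ε ≤ w.im := hmin (subset_closure hw)
        have h3 : (w.im)⁻¹ ≤ ε⁻¹ := inv_anti₀ hεpos h2
        have h4 : (0:ℝ) ≤ (w.im)⁻¹ := inv_nonneg.2 (le_of_lt (hDU hw))
        calc (‖KernelWbarAux.myF r n w‖₊ : ℝ≥0∞) ^ 2 * ENNReal.ofReal ((w.im)⁻¹ ^ 2)
            = ENNReal.ofReal (‖KernelWbarAux.myF r n w‖ ^ 2 * (w.im)⁻¹ ^ 2) := by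
              rw [ENNReal.ofReal_mul (by positivity), ← ENNReal.ofReal_coe_nnreal, coe_nnnorm,
                ← ENNReal.ofReal_pow (norm_nonneg _)]
          _ ≤ ENNReal.ofReal (C ^ 2 * (ε⁻¹) ^ 2) := by
              apply ENNReal.ofReal_le_ofReal
              have hC0 : 0 ≤ C := le_trans (norm_nonneg _) h1
              exact mul_le_mul (pow_le_pow_left₀ (norm_nonneg _) h1 2)
                (pow_le_pow_left₀ h4 h3 2) (by positivity) (by positivity)
      calc hNormSq D (KernelWbarAux.myF r n)
          ≤ ∫⁻ _ in D, ENNReal.ofReal (C ^ 2 * (ε⁻¹) ^ 2) ∂volume :=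
            setLIntegral_mono' hD.measurableSet hbound
        _ = ENNReal.ofReal (C ^ 2 * (ε⁻¹) ^ 2) * volume D := setLIntegral_const D _
        _ < ⊤ := by
            exact ENNReal.mul_lt_top ENNReal.ofReal_lt_top
              (lt_of_le_of_lt (measure_mono subset_closure) hcpt.measure_lt_top)
  · -- differentiability
    intro w hw
    exact (KernelWbarAux.myF_hasFDerivAt r n w (hDU hw)).differentiableAt
  · -- PDE
    intro w hw
    rw [KernelWbarAux.myF_Wbar r n w (hDU hw), hr]
    push_cast
    ring
  · -- linear independence
    rw [linearIndependent_iff']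
    intro s g hsum i hi
    set p : Polynomial ℂ := ∑ j ∈ s, Polynomial.C (g j) * Polynomial.X ^ j with hp
    have hinf : D.Infinite := by
      obtain ⟨w₀, hw₀⟩ := hne
      exact (infinite_of_mem_nhds w₀ (hD.mem_nhds hw₀))
    have hroot : ∀ x ∈ D, p.IsRoot x := by
      intro x hx
      have hx' := congrFun hsum ⟨x, hx⟩
      simp only [Finset.sum_apply, Pi.smul_apply, Set.restrict_apply, smul_eq_mul,
        Pi.zero_apply] at hx'
      have hne0 : ((x.im ^ r : ℝ) : ℂ) ≠ 0 := by
        exact_mod_cast (Real.rpow_pos_of_pos (hDU hx) r).ne'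
      have : ((x.im ^ r : ℝ) : ℂ) * ∑ j ∈ s, g j * x ^ j = 0 := by
        rw [Finset.mul_sum, ← hx']
        apply Finset.sum_congr rfl
        intro j hj
        show _ = g j * KernelWbarAux.myF r j x
        simp [KernelWbarAux.myF]
        ring
      have hsum0 : ∑ j ∈ s, g j * x ^ j = 0 := by
        rcases mul_eq_zero.1 this with h | h
        · exact absurd h hne0
        · exact h
      simp only [Polynomial.IsRoot, hp, Polynomial.eval_finset_sum, Polynomial.eval_mul,
        Polynomial.eval_C, Polynomial.eval_pow, Polynomial.eval_X]
      exact hsum0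
    have hp0 : p = 0 := p.eq_zero_of_infinite_isRoot (hinf.mono fun x hx => hroot x hx)
    have := congrArg (fun q => Polynomial.coeff q i) hp0
    simpa [hp, Polynomial.finset_sum_coeff, Polynomial.coeff_C_mul, Polynomial.coeff_X_pow,
      Finset.sum_ite_eq' s i, hi] using this
end
end

section
/- Let D = {w ∈ H² : |w| < 1} and α > -1/2. The unbounded operator W̄ + α : L²(D) → L²(D) does not have closed range (hence, being injective with dense range, it is not surjective). -/
open MeasureTheory Complex Filter Topology Metric
open scoped ENNReal NNReal InnerProductSpace

noncomputable section

/-- The unit half-disc `D = {w ∈ H² : |w| < 1}`. -/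
def halfDisc : Set ℂ := {w : ℂ | 0 < w.im ∧ ‖w‖ < 1}

namespace WCX

/-- cutoff: 0 for `s ≤ 1/8`, 1 for `s ≥ 1/4`. -/
def χ : ℝ → ℝ := fun s => Real.smoothTransition (8 * s - 1)

def χd : ℝ → ℝ := deriv χ

lemma χ_contDiff : ContDiff ℝ ((⊤:ℕ∞) : WithTop ℕ∞) χ := by
  have : χ = Real.smoothTransition ∘ fun s => 8 * s - 1 := rfl
  rw [this]
  exact Real.smoothTransition.contDiff.comp ((contDiff_const.mul contDiff_id).sub contDiff_const)

lemma χ_hasDerivAt (s : ℝ) : HasDerivAt χ (χd s) s :=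
  ((χ_contDiff.differentiable (by simp)) s).hasDerivAt

lemma χd_cont : Continuous χd := χ_contDiff.continuous_deriv (by exact_mod_cast le_top)

lemma χ_nonneg (s : ℝ) : 0 ≤ χ s := Real.smoothTransition.nonneg _
lemma χ_le_one (s : ℝ) : χ s ≤ 1 := Real.smoothTransition.le_one _
lemma χ_zero {s : ℝ} (h : s ≤ 1/8) : χ s = 0 :=
  Real.smoothTransition.zero_of_nonpos (by linarith)
lemma χ_one {s : ℝ} (h : 1/4 ≤ s) : χ s = 1 :=
  Real.smoothTransition.one_of_one_le (by linarith)

lemma χd_zero_lt {s : ℝ} (h : s < 1/8) : χd s = 0 := by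
  have he : χ =ᶠ[𝓝 s] fun _ => (0 : ℝ) := by
    filter_upwards [Iio_mem_nhds h] with x hx
    exact χ_zero (le_of_lt hx)
  rw [χd, he.deriv_eq, deriv_const]

lemma χd_zero_gt {s : ℝ} (h : 1/4 < s) : χd s = 0 := by
  have he : χ =ᶠ[𝓝 s] fun _ => (1 : ℝ) := by
    filter_upwards [Ioi_mem_nhds h] with x hx
    exact χ_one (le_of_lt hx)
  rw [χd, he.deriv_eq, deriv_const]

lemma rpow_le_max {a b s p : ℝ} (ha : 0 < a) (h1 : a ≤ s) (h2 : s ≤ b) :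
    s ^ p ≤ max (a ^ p) (b ^ p) := by
  rcases le_or_gt 0 p with hp | hp
  · exact le_max_of_le_right (Real.rpow_le_rpow (ha.le.trans h1) h2 hp)
  · exact le_max_of_le_left (Real.rpow_le_rpow_of_nonpos ha h1 hp.le)

lemma min_le_rpow {a b s p : ℝ} (ha : 0 < a) (h1 : a ≤ s) (h2 : s ≤ b) :
    min (a ^ p) (b ^ p) ≤ s ^ p := by
  rcases le_or_gt 0 p with hp | hp
  · exact min_le_of_left_le (Real.rpow_le_rpow ha.le h1 hp)
  · exact min_le_of_right_le (Real.rpow_le_rpow_of_nonpos (ha.trans_le h1) h2 hp.le)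

def E (j : ℝ) : ℂ → ℂ := fun w => Complex.exp (-Complex.I * j * w)

def u (α j : ℝ) : ℂ → ℂ := fun w => (↑(χ w.im * w.im ^ (-α)) : ℂ) * E j w

def g (α j : ℝ) : ℂ → ℂ := fun w => (↑(χd w.im * (w.im * w.im ^ (-α))) : ℂ) * E j w

lemma key (α j : ℝ) (w : ℂ) (hs : 0 < w.im) :
    DifferentiableAt ℝ (u α j) w ∧ Wbar (u α j) w + (α : ℂ) * u α j w = g α j w := by
  set s := w.im with hsdef
  have h1 : HasDerivAt (fun x : ℝ => χ x * x ^ (-α))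
      (χd s * s ^ (-α) + χ s * (-α * s ^ (-α - 1))) s :=
    (χ_hasDerivAt s).mul (Real.hasDerivAt_rpow_const (p := -α) (Or.inl hs.ne'))
  have h2 : HasFDerivAt (fun z : ℂ => χ z.im * z.im ^ (-α))
      ((χd s * s ^ (-α) + χ s * (-α * s ^ (-α - 1))) • Complex.imCLM) w :=
    by have := HasDerivAt.comp_hasFDerivAt w h1 Complex.imCLM.hasFDerivAt; exact this
  have h3 : HasFDerivAt (fun z : ℂ => (↑(χ z.im * z.im ^ (-α)) : ℂ))
      (Complex.ofRealCLM.comp ((χd s * s ^ (-α) + χ s * (-α * s ^ (-α - 1))) • Complex.imCLM)) w :=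
    Complex.ofRealCLM.hasFDerivAt.comp w h2
  have h4 : HasDerivAt (fun z : ℂ => -Complex.I * j * z) (-Complex.I * j) w := by
    simpa using (hasDerivAt_id w).const_mul (-Complex.I * (j:ℂ))
  have h5 : HasDerivAt (E j) (E j w * (-Complex.I * j)) w := h4.cexp
  have h6 : HasFDerivAt (E j)
      (((1 : ℂ →L[ℂ] ℂ).smulRight (E j w * (-Complex.I * j))).restrictScalars ℝ) w :=
    h5.hasFDerivAt.restrictScalars ℝ
  have h7 := h3.mul h6
  refine ⟨h7.differentiableAt, ?_⟩
  have hfd : fderiv ℝ (u α j) w = _ := h7.fderiv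
  show Wbar (u α j) w + (α : ℂ) * u α j w = g α j w
  rw [Wbar, dwbar, hfd]
  simp only [ContinuousLinearMap.add_apply, ContinuousLinearMap.smul_apply,
    ContinuousLinearMap.coe_restrictScalars', ContinuousLinearMap.smulRight_apply,
    ContinuousLinearMap.one_apply, ContinuousLinearMap.coe_comp', Function.comp_apply,
    Complex.ofRealCLM_apply, Complex.imCLM_apply, Complex.I_im, Complex.one_im]
  simp only [smul_eq_mul, mul_zero, smul_zero, mul_one, ← hsdef]
  have hr : s ^ (-α - 1) * s = s ^ (-α) := by
    rw [← Real.rpow_add_one hs.ne']; norm_num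
  have hreal : s * (χd s * s ^ (-α) + χ s * (-α * s ^ (-α - 1))) + α * (χ s * s ^ (-α))
      = χd s * (s * s ^ (-α)) := by linear_combination (-(α * χ s)) * hr
  have hrealC := congrArg (fun x : ℝ => (x : ℂ)) hreal
  simp only [u, g]
  linear_combination (norm := (push_cast; ring1))
    (Complex.I * Complex.I * (j : ℂ) * (s : ℂ) * ((χ s * s ^ (-α) : ℝ) : ℂ) * E j w
      - (s : ℂ) * E j w * ((χd s * s ^ (-α) + χ s * (-α * s ^ (-α - 1)) : ℝ) : ℂ))
      * Complex.I_mul_I + E j w * hrealC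

lemma norm_E (j : ℝ) (w : ℂ) : ‖E j w‖ = Real.exp (j * w.im) := by
  rw [E, Complex.norm_exp]
  congr 1
  simp [Complex.mul_re, Complex.mul_im]

lemma norm_u {α j : ℝ} {w : ℂ} (hs : 0 ≤ w.im) :
    ‖u α j w‖ = χ w.im * w.im ^ (-α) * Real.exp (j * w.im) := by
  rw [u, norm_mul, Complex.norm_real, norm_E, Real.norm_eq_abs,
    _root_.abs_of_nonneg (mul_nonneg (χ_nonneg _) (Real.rpow_nonneg hs _))]

lemma norm_g {α j : ℝ} {w : ℂ} (hs : 0 ≤ w.im) :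
    ‖g α j w‖ = |χd w.im| * (w.im * w.im ^ (-α)) * Real.exp (j * w.im) := by
  rw [g, norm_mul, Complex.norm_real, norm_E, Real.norm_eq_abs, abs_mul,
    _root_.abs_of_nonneg (mul_nonneg hs (Real.rpow_nonneg hs _))]

lemma isOpen_halfDisc : IsOpen halfDisc :=
  (isOpen_lt continuous_const Complex.continuous_im).inter
    (isOpen_lt continuous_norm continuous_const)

lemma ms_halfDisc : MeasurableSet halfDisc := isOpen_halfDisc.measurableSet

lemma integrand_eq (f : ℂ → ℂ) (w : ℂ) :
    (‖f w‖₊ : ℝ≥0∞) ^ 2 * ENNReal.ofReal ((w.im)⁻¹ ^ 2)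
      = ENNReal.ofReal (‖f w‖ ^ 2 * (w.im)⁻¹ ^ 2) := by
  rw [ENNReal.ofReal_mul (by positivity), ENNReal.ofReal_pow (norm_nonneg _),
    ofReal_norm, enorm_eq_nnnorm]

lemma hNormSq_le (f : ℂ → ℂ) (C : ℝ)
    (h : ∀ w ∈ halfDisc, ‖f w‖ ^ 2 * (w.im)⁻¹ ^ 2 ≤ C) :
    hNormSq halfDisc f ≤ ENNReal.ofReal C * volume halfDisc := by
  rw [hNormSq, ← setLIntegral_const]
  refine lintegral_mono_ae ((ae_restrict_iff' ms_halfDisc).2 (ae_of_all _ fun w hw => ?_))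
  rw [integrand_eq]
  exact ENNReal.ofReal_le_ofReal (h w hw)

lemma le_hNormSq (f : ℂ → ℂ) (B : Set ℂ) (hB : MeasurableSet B) (hBD : B ⊆ halfDisc) (C : ℝ)
    (h : ∀ w ∈ B, C ≤ ‖f w‖ ^ 2 * (w.im)⁻¹ ^ 2) :
    ENNReal.ofReal C * volume B ≤ hNormSq halfDisc f := by
  rw [hNormSq]
  refine le_trans ?_ (lintegral_mono_set hBD)
  rw [← setLIntegral_const]
  refine lintegral_mono_ae ((ae_restrict_iff' hB).2 (ae_of_all _ fun w hw => ?_))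
  rw [integrand_eq]
  exact ENNReal.ofReal_le_ofReal (h w hw)

end WCX

set_option maxHeartbeats 2000000 in
/-- on the unit half-disc, for `α > -1/2`, the (injective, densely ranged)
unbounded operator `W̄ + α` on `L²(D)` does not have closed range: it is not bounded
below, i.e. there is no `c > 0` with `c‖u‖² ≤ ‖(W̄+α)u‖²` for all `u` in its domain. -/
theorem Wbar_plus_alpha_not_closed_range (α : ℝ) (hα : -(1 / 2) < α) :
    ¬ ∃ c : ℝ, 0 < c ∧ ∀ u : ℂ → ℂ,
        (∀ w ∈ halfDisc, DifferentiableAt ℝ u w) →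
        HMemL2 halfDisc u →
        HMemL2 halfDisc (fun w => Wbar u w + (α : ℂ) * u w) →
        ENNReal.ofReal c * hNormSq halfDisc u
          ≤ hNormSq halfDisc (fun w => Wbar u w + (α : ℂ) * u w) := by
  rintro ⟨c, hc, hcl⟩
  classical
  obtain ⟨M0, hM0⟩ := (isCompact_Icc (a := (1/8:ℝ)) (b := (1/4:ℝ))).exists_bound_of_continuousOn
    WCX.χd_cont.continuousOn
  set M : ℝ := max M0 0 with hMdef
  have hM : ∀ x ∈ Set.Icc (1/8:ℝ) (1/4), |WCX.χd x| ≤ M :=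
    fun x hx => le_trans (hM0 x hx) (le_max_left _ _)
  have hMnn : 0 ≤ M := le_max_right _ _
  set K : ℝ := max ((1/8:ℝ) ^ (-α)) ((1:ℝ) ^ (-α)) with hKdef
  have hK0 : 0 < K := lt_max_of_lt_left (Real.rpow_pos_of_pos (by norm_num) _)
  set K2 : ℝ := max ((1/8:ℝ) ^ (-α)) ((1/4:ℝ) ^ (-α)) with hK2def
  have hK20 : 0 < K2 := lt_max_of_lt_left (Real.rpow_pos_of_pos (by norm_num) _)
  set m : ℝ := min ((3/8:ℝ) ^ (-α)) ((5/8:ℝ) ^ (-α)) with hmdef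
  have hm0 : 0 < m := lt_min (Real.rpow_pos_of_pos (by norm_num) _)
    (Real.rpow_pos_of_pos (by norm_num) _)
  -- the ball near i/2
  set w₀ : ℂ := ⟨0, 1/2⟩ with hw₀
  have habsw₀ : ‖w₀‖ = 1/2 := by
    rw [Complex.norm_def, Complex.normSq_mk]
    rw [show (0 * 0 + 1/2 * (1/2) : ℝ) = (1/2)^2 by norm_num, Real.sqrt_sq (by norm_num)]
  set B : Set ℂ := Metric.ball w₀ (1/8) with hBdef
  have hBprops : ∀ w ∈ B, 3/8 < w.im ∧ w.im < 5/8 ∧ ‖w‖ < 1 := by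
    intro w hw
    rw [hBdef, Metric.mem_ball, Complex.dist_eq] at hw
    have him : |w.im - 1/2| ≤ ‖w - w₀‖ := by
      have h := Complex.abs_im_le_norm (w - w₀)
      simpa [Complex.sub_im, hw₀] using h
    obtain ⟨ha, hb⟩ := abs_lt.mp (lt_of_le_of_lt him hw)
    have habs : ‖w‖ < 1 := by
      calc ‖w‖ = ‖(w - w₀) + w₀‖ := by ring_nf
      _ ≤ ‖w - w₀‖ + ‖w₀‖ := norm_add_le _ _
      _ < 1/8 + 1/2 := by rw [habsw₀]; linarith
      _ < 1 := by norm_num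
    exact ⟨by linarith, by linarith, habs⟩
  have hBsub : B ⊆ halfDisc := by
    intro w hw
    obtain ⟨h1, h2, h3⟩ := hBprops w hw
    exact ⟨by linarith, h3⟩
  have hBms : MeasurableSet B := measurableSet_ball
  have hvB0 : 0 < volume B := measure_ball_pos _ _ (by norm_num)
  have hvBt : volume B < ⊤ := measure_ball_lt_top
  set vB : ℝ := (volume B).toReal with hvBdef
  have hvB : 0 < vB := ENNReal.toReal_pos hvB0.ne' hvBt.ne
  have hDsub : halfDisc ⊆ Metric.ball (0:ℂ) 1 := by
    intro w hw
    rw [mem_ball_zero_iff]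
    exact hw.2
  have hvD : volume halfDisc ≤ volume (Metric.ball (0:ℂ) 1) := measure_mono hDsub
  have hvDt : volume (Metric.ball (0:ℂ) 1) < ⊤ := measure_ball_lt_top
  set vD : ℝ := (volume (Metric.ball (0:ℂ) 1)).toReal with hvDdef
  have hvDnn : 0 ≤ vD := ENNReal.toReal_nonneg
  -- main inequality for each n
  have main : ∀ n : ℕ, c * ((m * Real.exp (3*(n:ℝ)/8))^2 * vB)
      ≤ (M * K2 * Real.exp ((n:ℝ)/4))^2 * 64 * vD := by
    intro n
    set j : ℝ := (n : ℝ) with hjdef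
    have hj : 0 ≤ j := Nat.cast_nonneg n
    have hdiff : ∀ w ∈ halfDisc, DifferentiableAt ℝ (WCX.u α j) w :=
      fun w hw => (WCX.key α j w hw.1).1
    have heq : ∀ w ∈ halfDisc, Wbar (WCX.u α j) w + (α:ℂ) * WCX.u α j w = WCX.g α j w :=
      fun w hw => (WCX.key α j w hw.1).2
    have hcontu : ContinuousOn (WCX.u α j) halfDisc :=
      fun w hw => ((WCX.key α j w hw.1).1.continuousAt).continuousWithinAt
    -- pointwise bound for u on halfDisc
    have hb_u : ∀ w ∈ halfDisc, ‖WCX.u α j w‖ ^ 2 * (w.im)⁻¹ ^ 2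
        ≤ (K * Real.exp j)^2 * 64 := by
      intro w hw
      obtain ⟨hw1, hw2⟩ := hw
      have hslt1 : w.im < 1 := lt_of_le_of_lt (le_trans (le_abs_self _)
        (Complex.abs_im_le_norm w)) hw2
      rcases le_or_gt w.im (1/8) with hcase | hcase
      · have hz : ‖WCX.u α j w‖ = 0 := by
          rw [WCX.norm_u hw1.le, WCX.χ_zero hcase, zero_mul, zero_mul]
        calc ‖WCX.u α j w‖ ^ 2 * (w.im)⁻¹ ^ 2 = 0 := by rw [hz]; ring
        _ ≤ (K * Real.exp j)^2 * 64 := by positivity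
      · have hnu : ‖WCX.u α j w‖ ≤ K * Real.exp j := by
          rw [WCX.norm_u hw1.le]
          have h1 : WCX.χ w.im * w.im ^ (-α) ≤ K := by
            calc WCX.χ w.im * w.im ^ (-α) ≤ 1 * w.im ^ (-α) :=
                  mul_le_mul_of_nonneg_right (WCX.χ_le_one _) (Real.rpow_nonneg hw1.le _)
            _ = w.im ^ (-α) := one_mul _
            _ ≤ K := WCX.rpow_le_max (by norm_num) hcase.le hslt1.le
          have h2 : Real.exp (j * w.im) ≤ Real.exp j := Real.exp_le_exp.2 (by nlinarith)
          exact mul_le_mul h1 h2 (Real.exp_pos _).le hK0.le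
        have hsi : (w.im)⁻¹ ≤ 8 := by
          have h := inv_anti₀ (show (0:ℝ) < 1/8 by norm_num) hcase.le
          simpa using h
        calc ‖WCX.u α j w‖ ^ 2 * (w.im)⁻¹ ^ 2
            ≤ (K * Real.exp j)^2 * 8^2 :=
              mul_le_mul (pow_le_pow_left₀ (norm_nonneg _) hnu 2)
                (pow_le_pow_left₀ (by positivity) hsi 2) (by positivity) (by positivity)
        _ = (K * Real.exp j)^2 * 64 := by norm_num
    have hL2u : HMemL2 halfDisc (WCX.u α j) := by
      refine ⟨hcontu.aestronglyMeasurable WCX.ms_halfDisc, ?_⟩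
      refine lt_of_le_of_lt (WCX.hNormSq_le _ _ hb_u) ?_
      exact ENNReal.mul_lt_top ENNReal.ofReal_lt_top (lt_of_le_of_lt hvD hvDt)
    -- pointwise bound for Wbar u + α u on halfDisc
    have hb_g : ∀ w ∈ halfDisc, ‖Wbar (WCX.u α j) w + (α:ℂ) * WCX.u α j w‖ ^ 2 * (w.im)⁻¹ ^ 2
        ≤ (M * K2 * Real.exp (j/4))^2 * 64 := by
      intro w hw
      rw [heq w hw, WCX.norm_g hw.1.le]
      rcases lt_or_ge w.im (1/8) with hcase | hcase
      · rw [WCX.χd_zero_lt hcase]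
        calc (|(0:ℝ)| * (w.im * w.im ^ (-α)) * Real.exp (j * w.im)) ^ 2 * (w.im)⁻¹ ^ 2
            = 0 := by simp
        _ ≤ (M * K2 * Real.exp (j/4))^2 * 64 := by positivity
      rcases lt_or_ge (1/4:ℝ) w.im with hcase2 | hcase2
      · rw [WCX.χd_zero_gt hcase2]
        calc (|(0:ℝ)| * (w.im * w.im ^ (-α)) * Real.exp (j * w.im)) ^ 2 * (w.im)⁻¹ ^ 2
            = 0 := by simp
        _ ≤ (M * K2 * Real.exp (j/4))^2 * 64 := by positivity
      · have h1 : |WCX.χd w.im| ≤ M := hM _ ⟨hcase, hcase2⟩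
        have h2 : w.im * w.im ^ (-α) ≤ K2 := by
          calc w.im * w.im ^ (-α) ≤ 1 * w.im ^ (-α) :=
                mul_le_mul_of_nonneg_right (by linarith) (Real.rpow_nonneg hw.1.le _)
          _ = w.im ^ (-α) := one_mul _
          _ ≤ K2 := WCX.rpow_le_max (by norm_num) hcase hcase2
        have h3 : Real.exp (j * w.im) ≤ Real.exp (j/4) := Real.exp_le_exp.2 (by nlinarith)
        have h4 : (w.im)⁻¹ ≤ 8 := by
          have h := inv_anti₀ (show (0:ℝ) < 1/8 by norm_num) hcase
          simpa using h
        have hprod : |WCX.χd w.im| * (w.im * w.im ^ (-α)) * Real.exp (j * w.im)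
            ≤ M * K2 * Real.exp (j/4) := by
          have hnn1 : 0 ≤ w.im * w.im ^ (-α) :=
            mul_nonneg hw.1.le (Real.rpow_nonneg hw.1.le _)
          exact mul_le_mul (mul_le_mul h1 h2 hnn1 hMnn) h3 (Real.exp_pos _).le
            (by positivity)
        calc (|WCX.χd w.im| * (w.im * w.im ^ (-α)) * Real.exp (j * w.im)) ^ 2 * (w.im)⁻¹ ^ 2
            ≤ (M * K2 * Real.exp (j/4))^2 * 8^2 :=
              mul_le_mul (pow_le_pow_left₀ (by positivity) hprod 2)
                (pow_le_pow_left₀ (by positivity) h4 2) (by positivity) (by positivity)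
        _ = (M * K2 * Real.exp (j/4))^2 * 64 := by norm_num
    have hcontg : ContinuousOn (WCX.g α j) halfDisc := by
      intro w hw
      apply ContinuousAt.continuousWithinAt
      have h1 : ContinuousAt (fun z : ℂ => WCX.χd z.im * (z.im * z.im ^ (-α))) w := by
        apply ContinuousAt.mul
        · exact WCX.χd_cont.continuousAt.comp Complex.continuous_im.continuousAt
        · exact Complex.continuous_im.continuousAt.mul
            ((Real.continuousAt_rpow_const _ _ (Or.inl hw.1.ne')).comp
              Complex.continuous_im.continuousAt)
      have h2 : ContinuousAt (WCX.E j) w := by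
        apply Complex.continuous_exp.continuousAt.comp
        exact (continuous_const.mul continuous_id).continuousAt
      exact (Complex.continuous_ofReal.continuousAt.comp h1).mul h2
    have hgmeas : AEStronglyMeasurable (fun w => Wbar (WCX.u α j) w + (α:ℂ) * WCX.u α j w)
        (volume.restrict halfDisc) := by
      refine (hcontg.aestronglyMeasurable WCX.ms_halfDisc).congr ?_
      exact (ae_restrict_iff' WCX.ms_halfDisc).2 (ae_of_all _ fun w hw => (heq w hw).symm)
    have hL2g : HMemL2 halfDisc (fun w => Wbar (WCX.u α j) w + (α:ℂ) * WCX.u α j w) := by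
      refine ⟨hgmeas, ?_⟩
      refine lt_of_le_of_lt (WCX.hNormSq_le _ _ hb_g) ?_
      exact ENNReal.mul_lt_top ENNReal.ofReal_lt_top (lt_of_le_of_lt hvD hvDt)
    have H := hcl (WCX.u α j) hdiff hL2u hL2g
    -- lower bound
    have hlow : ENNReal.ofReal ((m * Real.exp (3*j/8))^2) * volume B
        ≤ hNormSq halfDisc (WCX.u α j) := by
      apply WCX.le_hNormSq _ _ hBms hBsub
      intro w hw
      obtain ⟨hb1, hb2, hb3⟩ := hBprops w hw
      have hwim : 0 < w.im := by linarith
      rw [WCX.norm_u hwim.le, WCX.χ_one (by linarith), one_mul]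
      have h2 : m ≤ w.im ^ (-α) := WCX.min_le_rpow (by norm_num) hb1.le hb2.le
      have h3 : Real.exp (3*j/8) ≤ Real.exp (j * w.im) := Real.exp_le_exp.2 (by nlinarith)
      have h4 : (1:ℝ) ≤ (w.im)⁻¹ := by
        have h := inv_anti₀ hwim (show w.im ≤ 1 by linarith)
        simpa using h
      calc (m * Real.exp (3*j/8))^2 = (m * Real.exp (3*j/8))^2 * 1 := (mul_one _).symm
      _ ≤ (w.im ^ (-α) * Real.exp (j * w.im)) ^ 2 * (w.im)⁻¹ ^ 2 := by
          refine mul_le_mul (pow_le_pow_left₀ (by positivity)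
            (mul_le_mul h2 h3 (Real.exp_pos _).le (Real.rpow_nonneg hwim.le _)) 2)
            ?_ (by norm_num) (by positivity)
          nlinarith
      _ = (w.im ^ (-α) * Real.exp (j * w.im)) ^ 2 * (w.im)⁻¹ ^ 2 := rfl
    -- upper bound
    have hup : hNormSq halfDisc (fun w => Wbar (WCX.u α j) w + (α:ℂ) * WCX.u α j w)
        ≤ ENNReal.ofReal ((M * K2 * Real.exp (j/4))^2 * 64) * volume (Metric.ball (0:ℂ) 1) :=
      le_trans (WCX.hNormSq_le _ _ hb_g) (mul_le_mul_right hvD _)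
    have hcomb : ENNReal.ofReal c * (ENNReal.ofReal ((m * Real.exp (3*j/8))^2) * volume B)
        ≤ ENNReal.ofReal ((M * K2 * Real.exp (j/4))^2 * 64) * volume (Metric.ball (0:ℂ) 1) :=
      le_trans (mul_le_mul_right hlow _) (le_trans H hup)
    rw [show volume B = ENNReal.ofReal vB from (ENNReal.ofReal_toReal hvBt.ne).symm,
      show volume (Metric.ball (0:ℂ) 1) = ENNReal.ofReal vD from
        (ENNReal.ofReal_toReal hvDt.ne).symm,
      ← ENNReal.ofReal_mul (show (0:ℝ) ≤ (m * Real.exp (3*j/8))^2 by positivity),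
      ← ENNReal.ofReal_mul hc.le,
      ← ENNReal.ofReal_mul (show (0:ℝ) ≤ (M * K2 * Real.exp (j/4))^2 * 64 by positivity)]
      at hcomb
    exact (ENNReal.ofReal_le_ofReal_iff (by positivity)).1 hcomb
  -- derive contradiction
  set P : ℝ := c * m^2 * vB with hPdef
  have hPpos : 0 < P := by positivity
  set Q : ℝ := 64 * M^2 * K2^2 * vD with hQdef
  have hQnn : 0 ≤ Q := by positivity
  set n : ℕ := ⌈4 * (Q / P)⌉₊ with hndef
  have h1 := main n
  have hE : 0 < Real.exp ((n:ℝ)/4) := Real.exp_pos _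
  have hexp : Real.exp (3*(n:ℝ)/8) ^ 2
      = Real.exp ((n:ℝ)/4) * (Real.exp ((n:ℝ)/4) * Real.exp ((n:ℝ)/4)) := by
    simp only [sq, ← Real.exp_add]
    congr 1
    ring
  have h2 : P * Real.exp ((n:ℝ)/4) ≤ Q := by
    refine le_of_mul_le_mul_right ?_ (mul_pos hE hE)
    calc P * Real.exp ((n:ℝ)/4) * (Real.exp ((n:ℝ)/4) * Real.exp ((n:ℝ)/4))
        = c * ((m * Real.exp (3*(n:ℝ)/8))^2 * vB) := by rw [mul_pow, hexp, hPdef]; ring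
    _ ≤ (M * K2 * Real.exp ((n:ℝ)/4))^2 * 64 * vD := h1
    _ = Q * (Real.exp ((n:ℝ)/4) * Real.exp ((n:ℝ)/4)) := by rw [hQdef]; ring
  have h3 : 4 * (Q / P) ≤ (n:ℝ) := Nat.le_ceil _
  have h4 : Q / P + 1 ≤ Real.exp ((n:ℝ)/4) :=
    le_trans (by linarith) (Real.add_one_le_exp _)
  have h5 : P * (Q / P + 1) ≤ P * Real.exp ((n:ℝ)/4) :=
    mul_le_mul_of_nonneg_left h4 hPpos.le
  have h6 : P * (Q / P + 1) = Q + P := by field_simp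
  linarith
end
end

section
/- Let D = {|w - 2i| < 1} ⊂ H², z₀ = 1 + 2i ∈ ∂D, and let λ ≥ 0 be a constant. Define u(w) = s^{λ/2} log(w - z₀) (branch cut to the right of z₀). Then u ∈ L²(D) with the hyperbolic measure, and W̄_σ u := (W̄ - λ/2)u = 0 on D, but (W + λ/2)u = s^{λ/2} · 2is/(w - z₀) + λ u is not in L²(D). -/
open MeasureTheory Complex Filter Topology Metric
open scoped ENNReal NNReal InnerProductSpace

noncomputable section

/-- The disc `D = {|w - 2i| < 1}` in the upper half-plane. -/
def discD : Set ℂ := {w : ℂ | ‖w - 2 * Complex.I‖ < 1}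

/-- The boundary point `z₀ = 1 + 2i` of `discD`. -/
def zZero : ℂ := 1 + 2 * Complex.I

/-- The function `u(w) = s^{λ/2} log(w - z₀)`, with the branch of the logarithm cut to
the right of `z₀` (realized here as `Complex.log (z₀ - w)`, which differs from
`log (w - z₀)` by an additive constant on `discD`). -/
def uLog (lam : ℝ) (w : ℂ) : ℂ := ((w.im ^ (lam / 2) : ℝ) : ℂ) * Complex.log (zZero - w)

/- ============ auxiliary lemmas ============ -/

section Aux

lemma aux_ofReal_nnnorm (x : ℂ) : ENNReal.ofReal ‖x‖ = (‖x‖₊ : ℝ≥0∞) := ENNReal.ofReal_eq_coe_nnreal (norm_nonneg x)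

open Complex

lemma aux_discD_eq : discD = Metric.ball (2 * Complex.I) 1 := by
  ext w; simp [discD, Metric.mem_ball, Complex.dist_eq]

lemma aux_measurableSet_discD : MeasurableSet discD := by
  rw [aux_discD_eq]; exact measurableSet_ball

lemma aux_discD_im {w : ℂ} (hw : w ∈ discD) : 1 < w.im ∧ w.im < 3 := by
  have h := hw
  simp only [discD, Set.mem_setOf_eq] at h
  have him : |w.im - 2| ≤ ‖w - 2 * Complex.I‖ := by
    have := Complex.abs_im_le_norm (w - 2 * Complex.I)
    simpa using this
  have : |w.im - 2| < 1 := lt_of_le_of_lt him h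
  rw [abs_lt] at this
  constructor <;> linarith [this.1, this.2]

lemma aux_discD_re {w : ℂ} (hw : w ∈ discD) : |w.re| < 1 := by
  have h := hw
  simp only [discD, Set.mem_setOf_eq] at h
  have hre : |w.re| ≤ ‖w - 2 * Complex.I‖ := by
    have := Complex.abs_re_le_norm (w - 2 * Complex.I)
    simpa using this
  exact lt_of_le_of_lt hre h

lemma aux_discD_zsub_re {w : ℂ} (hw : w ∈ discD) : 0 < (zZero - w).re := by
  have := aux_discD_re hw
  rw [abs_lt] at this
  simp only [zZero, Complex.sub_re, Complex.add_re, Complex.one_re, Complex.mul_re,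
    Complex.I_re, Complex.I_im, Complex.ofReal_re]
  norm_num
  linarith [this.2]

lemma aux_discD_slit {w : ℂ} (hw : w ∈ discD) : zZero - w ∈ Complex.slitPlane :=
  Complex.mem_slitPlane_iff.mpr (Or.inl (aux_discD_zsub_re hw))

lemma aux_discD_zsub_ne {w : ℂ} (hw : w ∈ discD) : zZero - w ≠ 0 := by
  intro h
  have := aux_discD_zsub_re hw
  rw [h] at this
  simp at this

lemma aux_discD_abs_pos {w : ℂ} (hw : w ∈ discD) : 0 < ‖zZero - w‖ :=
  norm_pos_iff.mpr (aux_discD_zsub_ne hw)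

lemma aux_discD_abs_lt {w : ℂ} (hw : w ∈ discD) : ‖zZero - w‖ < 2 := by
  have h := hw
  simp only [discD, Set.mem_setOf_eq] at h
  have : zZero - w = 1 - (w - 2 * Complex.I) := by
    simp only [zZero]; ring
  rw [this]
  calc ‖1 - (w - 2 * Complex.I)‖
      ≤ ‖(1 : ℂ)‖ + ‖w - 2 * Complex.I‖ := by
        simpa using norm_sub_le (1 : ℂ) (w - 2 * Complex.I)
    _ < 1 + 1 := by simp; exact h
    _ = 2 := by norm_num

end Aux

lemma uLog_fderiv (lam : ℝ) {w : ℂ} (hs : 0 < w.im) (hz : (zZero - w) ∈ Complex.slitPlane) (v : ℂ) :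
    fderiv ℝ (uLog lam) w v =
      ((w.im ^ (lam/2) : ℝ) : ℂ) * (v * ((zZero - w)⁻¹ * (-1))) +
        Complex.log (zZero - w) * ((lam/2 * w.im ^ (lam/2 - 1) * v.im : ℝ) : ℂ) := by
  have h1 : HasFDerivAt (fun w : ℂ => w.im) (Complex.imCLM : ℂ →L[ℝ] ℝ) w :=
    Complex.imCLM.hasFDerivAt
  have h2 : HasDerivAt (fun s : ℝ => s ^ (lam/2)) (lam/2 * w.im ^ (lam/2 - 1)) w.im :=
    Real.hasDerivAt_rpow_const (Or.inl hs.ne')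
  have h3 := h2.comp_hasFDerivAt w h1
  have h4 := Complex.ofRealCLM.hasFDerivAt.comp w h3
  have h5sub : HasDerivAt (fun w : ℂ => zZero - w) (-1) w := (hasDerivAt_id w).const_sub zZero
  have h5 : HasDerivAt (fun w : ℂ => Complex.log (zZero - w)) ((zZero - w)⁻¹ * (-1)) w :=
    (Complex.hasDerivAt_log hz).comp w h5sub
  have h6 := (h5.hasFDerivAt).restrictScalars ℝ
  have h7 := h4.mul h6
  have h8 : HasFDerivAt (uLog lam)
      ((((w.im ^ (lam/2) : ℝ) : ℂ)) •
          ContinuousLinearMap.restrictScalars ℝ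
            (ContinuousLinearMap.smulRight (1 : ℂ →L[ℂ] ℂ) ((zZero - w)⁻¹ * -1)) +
        Complex.log (zZero - w) •
          Complex.ofRealCLM.comp ((lam / 2 * w.im ^ (lam / 2 - 1)) • Complex.imCLM)) w := h7
  rw [h8.fderiv]
  simp [ContinuousLinearMap.smulRight_apply, smul_eq_mul, Complex.ofReal_mul]

lemma rpow_fact {s : ℝ} (hs : 0 < s) (lam : ℝ) :
    s * (lam/2 * s ^ (lam/2 - 1)) = lam/2 * s ^ (lam/2) := by
  rw [Real.rpow_sub_one hs.ne']
  field_simp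

lemma dwbar_uLog (lam : ℝ) {w : ℂ} (hs : 0 < w.im) (hz : (zZero - w) ∈ Complex.slitPlane) :
    dwbar (uLog lam) w =
      Complex.I * Complex.log (zZero - w) * ((lam/2 * w.im ^ (lam/2 - 1) : ℝ) : ℂ) / 2 := by
  have e1 := uLog_fderiv lam hs hz 1
  have eI := uLog_fderiv lam hs hz Complex.I
  simp only [Complex.one_im, Complex.I_im] at e1 eI
  simp only [mul_zero, mul_one, Complex.ofReal_zero] at e1 eI
  unfold dwbar
  rw [e1, eI]
  linear_combination (-((((w.im ^ (lam/2) : ℝ) : ℂ) * (zZero - w)⁻¹)/2)) * Complex.I_sq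

lemma dw_uLog (lam : ℝ) {w : ℂ} (hs : 0 < w.im) (hz : (zZero - w) ∈ Complex.slitPlane) :
    dw (uLog lam) w =
      -(((w.im ^ (lam/2) : ℝ) : ℂ) * (zZero - w)⁻¹)
        - Complex.I * Complex.log (zZero - w) * ((lam/2 * w.im ^ (lam/2 - 1) : ℝ) : ℂ) / 2 := by
  have e1 := uLog_fderiv lam hs hz 1
  have eI := uLog_fderiv lam hs hz Complex.I
  simp only [Complex.one_im, Complex.I_im] at e1 eI
  simp only [mul_zero, mul_one, Complex.ofReal_zero] at e1 eI
  unfold dw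
  rw [e1, eI]
  linear_combination ((((w.im ^ (lam/2) : ℝ) : ℂ) * (zZero - w)⁻¹)/2) * Complex.I_sq

lemma Wbar_uLog (lam : ℝ) {w : ℂ} (hs : 0 < w.im) (hz : (zZero - w) ∈ Complex.slitPlane) :
    Wbar (uLog lam) w = ((lam/2 : ℝ) : ℂ) * uLog lam w := by
  have key : (w.im : ℂ) * ((lam/2 * w.im ^ (lam/2 - 1) : ℝ) : ℂ)
      = ((lam/2 : ℝ) : ℂ) * ((w.im ^ (lam/2) : ℝ) : ℂ) := by
    rw [← Complex.ofReal_mul, ← Complex.ofReal_mul, ← rpow_fact hs lam]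
  unfold Wbar
  rw [dwbar_uLog lam hs hz]
  simp only [uLog]
  linear_combination (-(Complex.I^2) * Complex.log (zZero - w)) * key +
    (-(((lam/2 : ℝ) : ℂ) * ((w.im ^ (lam/2) : ℝ) : ℂ) * Complex.log (zZero - w))) * Complex.I_sq

lemma Wop_uLog (lam : ℝ) {w : ℂ} (hs : 0 < w.im) (hz : (zZero - w) ∈ Complex.slitPlane) :
    Wop (uLog lam) w + ((lam/2 : ℝ) : ℂ) * uLog lam w =
      (-(2 * Complex.I * (w.im : ℂ) * ((w.im ^ (lam/2) : ℝ) : ℂ))) * (zZero - w)⁻¹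
        + (lam : ℂ) * uLog lam w := by
  have key : (w.im : ℂ) * ((lam/2 * w.im ^ (lam/2 - 1) : ℝ) : ℂ)
      = ((lam/2 : ℝ) : ℂ) * ((w.im ^ (lam/2) : ℝ) : ℂ) := by
    rw [← Complex.ofReal_mul, ← Complex.ofReal_mul, ← rpow_fact hs lam]
  unfold Wop
  rw [dw_uLog lam hs hz]
  simp only [uLog]
  have hl : ((lam/2 : ℝ) : ℂ) * 2 = (lam : ℂ) := by push_cast; ring
  linear_combination (-(Complex.I^2) * Complex.log (zZero - w)) * key +
    (-(((lam/2 : ℝ) : ℂ) * ((w.im ^ (lam/2) : ℝ) : ℂ) * Complex.log (zZero - w))) * Complex.I_sq +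
    (((w.im ^ (lam / 2) : ℝ) : ℂ) * Complex.log (zZero - w)) * hl

/- ============ continuity and measurability ============ -/

lemma aux_contOn_rpowim (lam : ℝ) : ContinuousOn (fun w : ℂ => ((w.im ^ (lam/2) : ℝ) : ℂ)) discD := by
  intro w hw
  have hs : (0:ℝ) < w.im := lt_trans one_pos (aux_discD_im hw).1
  have h1 : ContinuousAt (fun x : ℝ => x ^ (lam/2)) w.im :=
    Real.continuousAt_rpow_const _ _ (Or.inl hs.ne')
  exact (Complex.continuous_ofReal.continuousAt.comp
    (h1.comp Complex.continuous_im.continuousAt)).continuousWithinAt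

lemma aux_contOn_log : ContinuousOn (fun w : ℂ => Complex.log (zZero - w)) discD := by
  intro w hw
  exact ((continuousAt_clog (aux_discD_slit hw)).comp
    ((continuous_const.sub continuous_id).continuousAt)).continuousWithinAt

lemma aux_contOn_uLog (lam : ℝ) : ContinuousOn (uLog lam) discD :=
  (aux_contOn_rpowim lam).mul aux_contOn_log

def Gfun (lam : ℝ) (w : ℂ) : ℂ :=
  -(2 * Complex.I * (w.im : ℂ) * ((w.im ^ (lam/2) : ℝ) : ℂ)) * (zZero - w)⁻¹

lemma aux_contOn_Gfun (lam : ℝ) : ContinuousOn (Gfun lam) discD := by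
  apply ContinuousOn.mul
  · apply ContinuousOn.neg
    exact ((continuous_const.continuousOn.mul
      (Complex.continuous_ofReal.comp Complex.continuous_im).continuousOn).mul
      (aux_contOn_rpowim lam))
  · exact ((continuous_const.sub continuous_id).continuousOn).inv₀
      (fun w hw => aux_discD_zsub_ne hw)

lemma aux_meas_weight : Measurable fun w : ℂ => ENNReal.ofReal ((w.im)⁻¹ ^ 2) :=
  ENNReal.measurable_ofReal.comp ((Complex.measurable_im.inv).pow_const 2)

lemma aux_aesm_uLog (lam : ℝ) : AEStronglyMeasurable (uLog lam) (volume.restrict discD) :=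
  (aux_contOn_uLog lam).aestronglyMeasurable aux_measurableSet_discD

/- ============ Part 2 ============ -/

lemma aux_part2 (lam : ℝ) : ∀ w ∈ discD,
    Wbar (uLog lam) w - ((lam / 2 : ℝ) : ℂ) * uLog lam w = 0 := by
  intro w hw
  rw [Wbar_uLog lam (lt_trans one_pos (aux_discD_im hw).1) (aux_discD_slit hw), sub_self]

/- ============ Part 1 : u ∈ L² ============ -/

lemma aux_nat_sq (n : ℕ) : ((n:ℝ)+1)^2 ≤ 9 * 2^n := by
  induction n with
  | zero => norm_num
  | succ k ih =>
    have hk : (k:ℝ) < 2^k := by exact_mod_cast (Nat.lt_two_pow_self : k < 2^k)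
    have h1 : (1:ℝ) ≤ 2^k := one_le_pow₀ (by norm_num)
    push_cast [pow_succ]
    push_cast at ih
    nlinarith

lemma aux_uLog_bound {lam : ℝ} (hlam : 0 ≤ lam) {w : ℂ} (hw : w ∈ discD) {n : ℕ}
    (hr : (1/2:ℝ)^n ≤ ‖zZero - w‖) :
    ‖uLog lam w‖ ≤ 3 ^ (lam/2) * (4*((n:ℝ)+1)) := by
  have him := aux_discD_im hw
  have him0 : (0:ℝ) ≤ w.im := by linarith [him.1]
  have hrpos : (0:ℝ) < ‖zZero - w‖ := aux_discD_abs_pos hw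
  have hrlt : ‖zZero - w‖ < 2 := aux_discD_abs_lt hw
  have hA : |w.im ^ (lam/2)| ≤ (3:ℝ) ^ (lam/2) := by
    rw [_root_.abs_of_nonneg (Real.rpow_nonneg him0 _)]
    exact Real.rpow_le_rpow him0 (by linarith [him.2]) (by linarith)
  have hlog2 : (0:ℝ) < Real.log 2 := Real.log_pos (by norm_num)
  have hB : ‖Complex.log (zZero - w)‖ ≤ 4*((n:ℝ)+1) := by
    have h1 : ‖Complex.log (zZero - w)‖ ≤ |Real.log (‖zZero - w‖)| + Real.pi := by
      calc ‖Complex.log (zZero - w)‖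
          ≤ |(Complex.log (zZero - w)).re| + |(Complex.log (zZero - w)).im| :=
            Complex.norm_le_abs_re_add_abs_im _
        _ = |Real.log (‖zZero - w‖)| + |Complex.arg (zZero - w)| := by
            rw [Complex.log_re, Complex.log_im]
        _ ≤ _ := by linarith [Complex.abs_arg_le_pi (zZero - w)]
    have h2 : |Real.log (‖zZero - w‖)| ≤ ((n:ℝ)+1) * Real.log 2 := by
      rw [abs_le]
      constructor
      · have hlow : Real.log ((1/2:ℝ)^n) ≤ Real.log (‖zZero - w‖) :=
          (Real.log_le_log_iff (by positivity) hrpos).mpr hr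
        rw [Real.log_pow] at hlow
        have : Real.log (1/2 : ℝ) = -Real.log 2 := by
          rw [one_div, Real.log_inv]
        rw [this] at hlow
        nlinarith [hlow]
      · have : Real.log (‖zZero - w‖) ≤ Real.log 2 :=
          (Real.log_le_log_iff hrpos (by norm_num)).mpr hrlt.le
        nlinarith [this]
    have h3 : ((n:ℝ)+1) * Real.log 2 + Real.pi ≤ 4*((n:ℝ)+1) := by
      have l2 : Real.log 2 < 0.7 := lt_of_lt_of_le Real.log_two_lt_d9 (by norm_num)
      have hpi : Real.pi < 3.15 := Real.pi_lt_d2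
      have hn : (0:ℝ) ≤ (n:ℝ) := Nat.cast_nonneg n
      nlinarith
    linarith
  calc ‖uLog lam w‖ = |w.im ^ (lam/2)| * ‖Complex.log (zZero - w)‖ := by
        rw [uLog, norm_mul, Complex.norm_real, Real.norm_eq_abs]
    _ ≤ (3:ℝ)^(lam/2) * (4*((n:ℝ)+1)) := by
        apply mul_le_mul hA hB (norm_nonneg _)
        positivity

lemma aux_cover : discD ⊆ ⋃ n : ℕ,
    ((Metric.ball zZero (2*(1/2:ℝ)^n) \ Metric.ball zZero ((1/2:ℝ)^n)) ∩ discD) := by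
  intro w hw
  have hdist : dist w zZero = ‖zZero - w‖ := by
    rw [Complex.dist_eq, ← norm_sub_rev]
  have hr0 : 0 < dist w zZero := by rw [hdist]; exact aux_discD_abs_pos hw
  have hr2 : dist w zZero < 2 := by rw [hdist]; exact aux_discD_abs_lt hw
  have hex : ∃ n : ℕ, (1/2:ℝ)^n ≤ dist w zZero := by
    obtain ⟨m, hm⟩ := exists_pow_lt_of_lt_one hr0 (by norm_num : (1/2:ℝ) < 1)
    exact ⟨m, hm.le⟩
  set n := Nat.find hex with hn
  have h1 : (1/2:ℝ)^n ≤ dist w zZero := Nat.find_spec hex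
  have h2 : dist w zZero < 2*(1/2:ℝ)^n := by
    match hn2 : n with
    | 0 => simpa using hr2
    | k+1 =>
      have hk := Nat.find_min hex (by omega : k < n)
      push_neg at hk
      calc dist w zZero < (1/2:ℝ)^k := hk
        _ = 2*(1/2:ℝ)^(k+1) := by ring
  refine Set.mem_iUnion.mpr ⟨n, ⟨⟨Metric.mem_ball.mpr h2, ?_⟩, hw⟩⟩
  simp only [Metric.mem_ball, not_lt]
  exact h1

lemma aux_part1_fin {lam : ℝ} (hlam : 0 ≤ lam) : hNormSq discD (uLog lam) < ⊤ := by
  have hmain : hNormSq discD (uLog lam) ≤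
      ENNReal.ofReal (((3:ℝ)^(lam/2))^2 * 2304) * (1 - 2⁻¹ : ℝ≥0∞)⁻¹ := by
    rw [hNormSq]
    set B : ℕ → Set ℂ := fun n =>
      ((Metric.ball zZero (2*(1/2:ℝ)^n) \ Metric.ball zZero ((1/2:ℝ)^n)) ∩ discD) with hB
    have hBm : ∀ n, MeasurableSet (B n) := fun n =>
      (measurableSet_ball.diff measurableSet_ball).inter aux_measurableSet_discD
    calc ∫⁻ w in discD, (‖uLog lam w‖₊ : ℝ≥0∞) ^ 2 * ENNReal.ofReal ((w.im)⁻¹ ^ 2)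
        ≤ ∫⁻ w in ⋃ n, B n, (‖uLog lam w‖₊ : ℝ≥0∞) ^ 2 * ENNReal.ofReal ((w.im)⁻¹ ^ 2) :=
          lintegral_mono_set aux_cover
      _ ≤ ∑' n : ℕ, ∫⁻ w in B n, (‖uLog lam w‖₊ : ℝ≥0∞) ^ 2 * ENNReal.ofReal ((w.im)⁻¹ ^ 2) :=
          lintegral_iUnion_le _ _
      _ ≤ ∑' n : ℕ, ENNReal.ofReal (((3:ℝ)^(lam/2) * (4*((n:ℝ)+1)))^2) * volume (B n) := by
          refine ENNReal.tsum_le_tsum fun n => ?_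
          have hpt : ∀ x ∈ B n, (‖uLog lam x‖₊ : ℝ≥0∞) ^ 2 * ENNReal.ofReal ((x.im)⁻¹ ^ 2)
              ≤ ENNReal.ofReal (((3:ℝ)^(lam/2) * (4*((n:ℝ)+1)))^2) := by
            intro x hx
            obtain ⟨⟨hxb, hxnb⟩, hxD⟩ := hx
            have hxr : (1/2:ℝ)^n ≤ ‖zZero - x‖ := by
              have : ¬ dist x zZero < (1/2:ℝ)^n := by simpa [Metric.mem_ball] using hxnb
              rw [Complex.dist_eq, ← norm_sub_rev] at this
              linarith [not_lt.mp this]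
            have hbound := aux_uLog_bound hlam hxD hxr
            have h1 : (‖uLog lam x‖₊ : ℝ≥0∞) ^ 2
                ≤ ENNReal.ofReal (((3:ℝ)^(lam/2) * (4*((n:ℝ)+1)))^2) := by
              rw [← aux_ofReal_nnnorm, ← ENNReal.ofReal_pow (norm_nonneg _)]
              exact ENNReal.ofReal_le_ofReal (pow_le_pow_left₀ (norm_nonneg _) hbound 2)
            have h2 : ENNReal.ofReal ((x.im)⁻¹ ^ 2) ≤ 1 := by
              rw [ENNReal.ofReal_le_one]
              have him := (aux_discD_im hxD).1
              have : (x.im)⁻¹ ≤ 1 := by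
                rw [inv_le_one_iff₀]; right; linarith
              have h0 : (0:ℝ) ≤ (x.im)⁻¹ := by positivity
              nlinarith
            calc (‖uLog lam x‖₊ : ℝ≥0∞) ^ 2 * ENNReal.ofReal ((x.im)⁻¹ ^ 2)
                ≤ ENNReal.ofReal (((3:ℝ)^(lam/2) * (4*((n:ℝ)+1)))^2) * 1 := mul_le_mul' h1 h2
              _ = _ := mul_one _
          calc ∫⁻ w in B n, (‖uLog lam w‖₊ : ℝ≥0∞) ^ 2 * ENNReal.ofReal ((w.im)⁻¹ ^ 2)
              ≤ ∫⁻ _ in B n, ENNReal.ofReal (((3:ℝ)^(lam/2) * (4*((n:ℝ)+1)))^2) :=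
                setLIntegral_mono' (hBm n) hpt
            _ = ENNReal.ofReal (((3:ℝ)^(lam/2) * (4*((n:ℝ)+1)))^2) * volume (B n) :=
                setLIntegral_const _ _
      _ ≤ ∑' n : ℕ, ENNReal.ofReal (((3:ℝ)^(lam/2))^2 * 2304) * (2⁻¹ : ℝ≥0∞)^n := by
          refine ENNReal.tsum_le_tsum fun n => ?_
          have hvol : volume (B n) ≤ ENNReal.ofReal ((2*(1/2:ℝ)^n)^2) * NNReal.pi := by
            calc volume (B n) ≤ volume (Metric.ball zZero (2*(1/2:ℝ)^n)) :=
                  measure_mono (Set.inter_subset_left.trans Set.diff_subset)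
              _ = ENNReal.ofReal (2*(1/2:ℝ)^n) ^ 2 * NNReal.pi := Complex.volume_ball _ _
              _ = ENNReal.ofReal ((2*(1/2:ℝ)^n)^2) * NNReal.pi := by
                  rw [ENNReal.ofReal_pow (by positivity)]
          have hpi : (NNReal.pi : ℝ≥0∞) ≤ 4 := by
            rw [show (4:ℝ≥0∞) = ((4:ℝ≥0):ℝ≥0∞) by norm_num]
            rw [ENNReal.coe_le_coe, ← NNReal.coe_le_coe]
            simpa using Real.pi_le_four
          calc ENNReal.ofReal (((3:ℝ)^(lam/2) * (4*((n:ℝ)+1)))^2) * volume (B n)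
              ≤ ENNReal.ofReal (((3:ℝ)^(lam/2) * (4*((n:ℝ)+1)))^2) *
                  (ENNReal.ofReal ((2*(1/2:ℝ)^n)^2) * 4) := by
                refine mul_le_mul' le_rfl (hvol.trans (mul_le_mul' le_rfl hpi))
            _ = ENNReal.ofReal ((((3:ℝ)^(lam/2) * (4*((n:ℝ)+1)))^2 * (2*(1/2:ℝ)^n)^2) * 4) := by
                rw [← mul_assoc, ← ENNReal.ofReal_mul (by positivity),
                  show (4:ℝ≥0∞) = ENNReal.ofReal 4 from (ENNReal.ofReal_ofNat 4).symm,
                  ← ENNReal.ofReal_mul (by positivity)]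
            _ ≤ ENNReal.ofReal ((((3:ℝ)^(lam/2))^2 * 2304) * (1/2:ℝ)^n) := by
                apply ENNReal.ofReal_le_ofReal
                have hsq := aux_nat_sq n
                have hhalf : ((1/2:ℝ)^n) * ((1/2:ℝ)^n) * (2:ℝ)^n = (1/2:ℝ)^n := by
                  rw [← mul_pow, ← mul_pow]; norm_num
                have h3p : (0:ℝ) ≤ ((3:ℝ)^(lam/2))^2 := by positivity
                nlinarith [pow_pos (by norm_num : (0:ℝ) < 1/2) n,
                  pow_pos (by norm_num : (0:ℝ) < 2) n, sq_nonneg ((3:ℝ)^(lam/2)),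
                  mul_le_mul_of_nonneg_right hsq (le_of_lt (pow_pos (by norm_num : (0:ℝ) < 1/2) n))]
            _ = ENNReal.ofReal (((3:ℝ)^(lam/2))^2 * 2304) * (2⁻¹ : ℝ≥0∞)^n := by
                rw [ENNReal.ofReal_mul (by positivity)]
                congr 1
                rw [show ((1:ℝ)/2)^n = ((2:ℝ)⁻¹)^n by norm_num,
                  ENNReal.ofReal_pow (by positivity), ENNReal.ofReal_inv_of_pos (by norm_num),
                  ENNReal.ofReal_ofNat]
      _ = ENNReal.ofReal (((3:ℝ)^(lam/2))^2 * 2304) * (1 - 2⁻¹ : ℝ≥0∞)⁻¹ := by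
          rw [ENNReal.tsum_mul_left, ENNReal.tsum_geometric]
  refine lt_of_le_of_lt hmain ?_
  rw [ENNReal.one_sub_inv_two, inv_inv]
  exact ENNReal.mul_lt_top ENNReal.ofReal_lt_top (by norm_num)

/- ============ Part 3 : divergence ============ -/

def cball (n : ℕ) : ℂ := ((1 - (1/2:ℝ)^n : ℝ) : ℂ) + 2 * Complex.I

def rball (n : ℕ) : ℝ := (1/2:ℝ)^n / 4

lemma aux_ball_subset (n : ℕ) : Metric.ball (cball n) (rball n) ⊆ discD := by
  intro w hw
  have hd : dist w (cball n) < rball n := Metric.mem_ball.mp hw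
  have hpow : (0:ℝ) < (1/2:ℝ)^n := by positivity
  have hpow1 : (1/2:ℝ)^n ≤ 1 := pow_le_one₀ (by norm_num) (by norm_num)
  have hc : ‖cball n - 2 * Complex.I‖ = 1 - (1/2:ℝ)^n := by
    have : cball n - 2 * Complex.I = ((1 - (1/2:ℝ)^n : ℝ) : ℂ) := by rw [cball]; ring
    rw [this, Complex.norm_real, Real.norm_eq_abs, _root_.abs_of_nonneg (by linarith)]
  show ‖w - 2 * Complex.I‖ < 1
  calc ‖w - 2 * Complex.I‖
      = ‖(w - cball n) + (cball n - 2 * Complex.I)‖ := by ring_nf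
    _ ≤ ‖w - cball n‖ + ‖cball n - 2 * Complex.I‖ :=
        norm_add_le _ _
    _ < rball n + (1 - (1/2:ℝ)^n) := by
        rw [hc]
        have : ‖w - cball n‖ = dist w (cball n) := (Complex.dist_eq _ _).symm
        linarith [this ▸ hd]
    _ ≤ 1 := by rw [rball]; linarith
  
lemma aux_ball_z0 {n : ℕ} {w : ℂ} (hw : w ∈ Metric.ball (cball n) (rball n)) :
    ‖zZero - w‖ ≤ 2 * (1/2:ℝ)^n := by
  have hd : dist w (cball n) < rball n := Metric.mem_ball.mp hw
  have hz : zZero - cball n = (((1/2:ℝ)^n : ℝ) : ℂ) := by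
    rw [zZero, cball]; push_cast; ring
  have hpow : (0:ℝ) < (1/2:ℝ)^n := by positivity
  calc ‖zZero - w‖ = ‖(zZero - cball n) + (cball n - w)‖ := by ring_nf
    _ ≤ ‖zZero - cball n‖ + ‖cball n - w‖ := norm_add_le _ _
    _ ≤ (1/2:ℝ)^n + rball n := by
        have h1 : ‖zZero - cball n‖ = (1/2:ℝ)^n := by
          rw [hz, Complex.norm_real, Real.norm_eq_abs, _root_.abs_of_nonneg hpow.le]
        have h2 : ‖cball n - w‖ = dist w (cball n) := by
          rw [Complex.dist_eq, ← norm_sub_rev]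
        linarith [h2 ▸ hd]
    _ ≤ 2 * (1/2:ℝ)^n := by rw [rball]; linarith

lemma aux_ball_disj : Pairwise (Function.onFun Disjoint fun n : ℕ => Metric.ball (cball n) (rball n)) := by
  have key : ∀ m n : ℕ, m < n →
      Disjoint (Metric.ball (cball m) (rball m)) (Metric.ball (cball n) (rball n)) := by
    intro m n hmn
    apply Metric.ball_disjoint_ball
    have hd : dist (cball m) (cball n) = |(1/2:ℝ)^n - (1/2:ℝ)^m| := by
      have : cball m - cball n = (((1/2:ℝ)^n - (1/2:ℝ)^m : ℝ) : ℂ) := by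
        rw [cball, cball]; push_cast; ring
      rw [Complex.dist_eq, this, Complex.norm_real, Real.norm_eq_abs]
    have hlt : (1/2:ℝ)^n ≤ (1/2:ℝ)^m / 2 := by
      have : (1/2:ℝ)^n ≤ (1/2:ℝ)^(m+1) :=
        pow_le_pow_of_le_one (by norm_num) (by norm_num) hmn
      calc (1/2:ℝ)^n ≤ (1/2:ℝ)^(m+1) := this
        _ = (1/2:ℝ)^m / 2 := by rw [pow_succ]; ring
    have hpm : (0:ℝ) < (1/2:ℝ)^m := by positivity
    have hpn : (0:ℝ) < (1/2:ℝ)^n := by positivity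
    rw [hd, rball, rball, abs_sub_comm, _root_.abs_of_nonneg (by linarith)]
    linarith
  intro m n hmn
  rcases lt_or_gt_of_ne hmn with h | h
  · exact key m n h
  · exact (key n m h).symm

lemma aux_G_top {lam : ℝ} (hlam : 0 ≤ lam) :
    ∫⁻ w in discD, (‖Gfun lam w‖₊ : ℝ≥0∞) ^ 2 * ENNReal.ofReal ((w.im)⁻¹ ^ 2) = ⊤ := by
  have hsub : (⋃ n : ℕ, Metric.ball (cball n) (rball n)) ⊆ discD :=
    Set.iUnion_subset aux_ball_subset
  have hper : ∀ n : ℕ, ENNReal.ofReal (1/48 : ℝ) ≤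
      ∫⁻ w in Metric.ball (cball n) (rball n),
        (‖Gfun lam w‖₊ : ℝ≥0∞) ^ 2 * ENNReal.ofReal ((w.im)⁻¹ ^ 2) := by
    intro n
    have hpow : (0:ℝ) < (1/2:ℝ)^n := by positivity
    have hpt : ∀ x ∈ Metric.ball (cball n) (rball n),
        ENNReal.ofReal ((((1/2:ℝ)^n)⁻¹)^2 * (1/9 : ℝ)) ≤
          (‖Gfun lam x‖₊ : ℝ≥0∞) ^ 2 * ENNReal.ofReal ((x.im)⁻¹ ^ 2) := by
      intro x hx
      have hxD : x ∈ discD := aux_ball_subset n hx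
      have him := aux_discD_im hxD
      have hxim : (0:ℝ) < x.im := by linarith [him.1]
      have habs := aux_ball_z0 hx
      have habs0 : (0:ℝ) < ‖zZero - x‖ := aux_discD_abs_pos hxD
      -- norm of Gfun
      have hf1 : (1:ℝ) ≤ x.im ^ (lam/2) :=
        Real.one_le_rpow (by linarith [him.1]) (by linarith)
      have hGnorm : ‖Gfun lam x‖ = 2 * x.im * x.im ^ (lam/2) * (‖zZero - x‖)⁻¹ := by
        rw [Gfun]
        rw [norm_mul, norm_neg, norm_mul, norm_mul, norm_mul]
        simp only [Complex.norm_ofNat, Complex.norm_I, Complex.norm_real, Real.norm_eq_abs,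
          norm_inv]
        rw [_root_.abs_of_nonneg hxim.le, _root_.abs_of_nonneg (Real.rpow_nonneg hxim.le _)]
        ring
      have hGge : (((1/2:ℝ)^n)⁻¹) ≤ ‖Gfun lam x‖ := by
        rw [hGnorm]
        have hinv : (2 * (1/2:ℝ)^n)⁻¹ ≤ (‖zZero - x‖)⁻¹ :=
          inv_anti₀ habs0 habs
        have h2 : (1:ℝ) ≤ x.im := him.1.le
        calc ((1/2:ℝ)^n)⁻¹ = 2 * 1 * 1 * (2 * (1/2:ℝ)^n)⁻¹ := by
              rw [mul_inv]; field_simp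
          _ ≤ 2 * x.im * x.im ^ (lam/2) * (‖zZero - x‖)⁻¹ := by
              have hb : (0:ℝ) < (‖zZero - x‖)⁻¹ := by positivity
              have : 2 * 1 * 1 * (2 * (1/2:ℝ)^n)⁻¹ ≤ 2 * 1 * 1 * (‖zZero - x‖)⁻¹ := by
                apply mul_le_mul_of_nonneg_left hinv (by norm_num)
              refine this.trans ?_
              apply mul_le_mul_of_nonneg_right _ hb.le
              nlinarith
      have h1 : ENNReal.ofReal ((((1/2:ℝ)^n)⁻¹)^2) ≤ (‖Gfun lam x‖₊ : ℝ≥0∞) ^ 2 := by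
        rw [← aux_ofReal_nnnorm, ← ENNReal.ofReal_pow (norm_nonneg _)]
        exact ENNReal.ofReal_le_ofReal (pow_le_pow_left₀ (by positivity) hGge 2)
      have h2 : ENNReal.ofReal (1/9 : ℝ) ≤ ENNReal.ofReal ((x.im)⁻¹ ^ 2) := by
        apply ENNReal.ofReal_le_ofReal
        have hinv3 : (3:ℝ)⁻¹ ≤ (x.im)⁻¹ := inv_anti₀ hxim him.2.le
        calc (1/9:ℝ) = (3⁻¹:ℝ)^2 := by norm_num
          _ ≤ ((x.im)⁻¹)^2 := pow_le_pow_left₀ (by norm_num) hinv3 2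
      calc ENNReal.ofReal ((((1/2:ℝ)^n)⁻¹)^2 * (1/9 : ℝ))
          = ENNReal.ofReal ((((1/2:ℝ)^n)⁻¹)^2) * ENNReal.ofReal (1/9 : ℝ) :=
            ENNReal.ofReal_mul (by positivity)
        _ ≤ (‖Gfun lam x‖₊ : ℝ≥0∞) ^ 2 * ENNReal.ofReal ((x.im)⁻¹ ^ 2) := mul_le_mul' h1 h2
    have hpi3 : (3:ℝ≥0∞) ≤ (NNReal.pi : ℝ≥0∞) := by
      rw [show (3:ℝ≥0∞) = ((3:ℝ≥0):ℝ≥0∞) by norm_num, ENNReal.coe_le_coe, ← NNReal.coe_le_coe]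
      simpa using Real.pi_gt_three.le
    calc ENNReal.ofReal (1/48 : ℝ)
        = ENNReal.ofReal ((((1/2:ℝ)^n)⁻¹)^2 * (1/9 : ℝ) * ((rball n)^2)) * 3 := by
          rw [show (3:ℝ≥0∞) = ENNReal.ofReal 3 from (ENNReal.ofReal_ofNat 3).symm,
            ← ENNReal.ofReal_mul (by positivity)]
          congr 1
          rw [rball]
          field_simp
          ring
      _ = ENNReal.ofReal ((((1/2:ℝ)^n)⁻¹)^2 * (1/9 : ℝ)) * (ENNReal.ofReal ((rball n)^2) * 3) := by
          rw [← mul_assoc, ← ENNReal.ofReal_mul (by positivity)]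
      _ ≤ ENNReal.ofReal ((((1/2:ℝ)^n)⁻¹)^2 * (1/9 : ℝ)) *
            (ENNReal.ofReal (rball n) ^ 2 * NNReal.pi) := by
          apply mul_le_mul' le_rfl
          rw [ENNReal.ofReal_pow (by rw [rball]; positivity)]
          exact mul_le_mul' le_rfl hpi3
      _ = ENNReal.ofReal ((((1/2:ℝ)^n)⁻¹)^2 * (1/9 : ℝ)) *
            volume (Metric.ball (cball n) (rball n)) := by rw [Complex.volume_ball]
      _ = ∫⁻ _ in Metric.ball (cball n) (rball n),
            ENNReal.ofReal ((((1/2:ℝ)^n)⁻¹)^2 * (1/9 : ℝ)) := (setLIntegral_const _ _).symm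
      _ ≤ ∫⁻ w in Metric.ball (cball n) (rball n),
            (‖Gfun lam w‖₊ : ℝ≥0∞) ^ 2 * ENNReal.ofReal ((w.im)⁻¹ ^ 2) :=
          setLIntegral_mono' measurableSet_ball hpt
  refine top_le_iff.mp ?_
  calc (⊤:ℝ≥0∞) = ∑' _ : ℕ, ENNReal.ofReal (1/48 : ℝ) :=
        (ENNReal.tsum_const_eq_top_of_ne_zero (by norm_num)).symm
    _ ≤ ∑' n : ℕ, ∫⁻ w in Metric.ball (cball n) (rball n),
          (‖Gfun lam w‖₊ : ℝ≥0∞) ^ 2 * ENNReal.ofReal ((w.im)⁻¹ ^ 2) :=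
        ENNReal.tsum_le_tsum hper
    _ = ∫⁻ w in ⋃ n : ℕ, Metric.ball (cball n) (rball n),
          (‖Gfun lam w‖₊ : ℝ≥0∞) ^ 2 * ENNReal.ofReal ((w.im)⁻¹ ^ 2) :=
        (lintegral_iUnion (fun _ => measurableSet_ball) aux_ball_disj _).symm
    _ ≤ ∫⁻ w in discD, (‖Gfun lam w‖₊ : ℝ≥0∞) ^ 2 * ENNReal.ofReal ((w.im)⁻¹ ^ 2) :=
        lintegral_mono_set hsub

/- ============ Part 3 assembly ============ -/

lemma aux_sq_ineq (y z : ℝ≥0∞) : (y + z)^2 ≤ 4*y^2 + 4*z^2 := by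
  rcases le_total y z with h | h
  · calc (y+z)^2 ≤ (z+z)^2 := by gcongr
      _ = 4*z^2 := by ring
      _ ≤ 4*y^2 + 4*z^2 := le_add_self
  · calc (y+z)^2 ≤ (y+y)^2 := by gcongr
      _ = 4*y^2 := by ring
      _ ≤ 4*y^2 + 4*z^2 := self_le_add_right _ _

lemma aux_lamu_fin {lam : ℝ} (hlam : 0 ≤ lam) :
    ∫⁻ w in discD, (‖(lam:ℂ) * uLog lam w‖₊ : ℝ≥0∞)^2 * ENNReal.ofReal ((w.im)⁻¹ ^ 2) < ⊤ := by
  have hc : ((‖(lam:ℂ)‖₊ : ℝ≥0∞))^2 ≠ ⊤ := by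
    exact ENNReal.pow_ne_top ENNReal.coe_ne_top
  calc ∫⁻ w in discD, (‖(lam:ℂ) * uLog lam w‖₊ : ℝ≥0∞)^2 * ENNReal.ofReal ((w.im)⁻¹ ^ 2)
      = ∫⁻ w in discD, (‖(lam:ℂ)‖₊ : ℝ≥0∞)^2 *
          ((‖uLog lam w‖₊ : ℝ≥0∞)^2 * ENNReal.ofReal ((w.im)⁻¹ ^ 2)) := by
        apply lintegral_congr fun w => ?_
        rw [nnnorm_mul, ENNReal.coe_mul]
        ring
    _ = (‖(lam:ℂ)‖₊ : ℝ≥0∞)^2 *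
          ∫⁻ w in discD, (‖uLog lam w‖₊ : ℝ≥0∞)^2 * ENNReal.ofReal ((w.im)⁻¹ ^ 2) :=
        lintegral_const_mul' _ _ hc
    _ < ⊤ := ENNReal.mul_lt_top (lt_of_le_of_ne le_top hc) (aux_part1_fin hlam)

lemma aux_part3 {lam : ℝ} (hlam : 0 ≤ lam) :
    ¬ HMemL2 discD (fun w => Wop (uLog lam) w + ((lam / 2 : ℝ) : ℂ) * uLog lam w) := by
  rintro ⟨-, hfin⟩
  rw [hNormSq] at hfin
  have hcong : (∫⁻ w in discD,
        (‖Wop (uLog lam) w + ((lam / 2 : ℝ) : ℂ) * uLog lam w‖₊ : ℝ≥0∞)^2 *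
          ENNReal.ofReal ((w.im)⁻¹ ^ 2)) =
      ∫⁻ w in discD, (‖Gfun lam w + (lam:ℂ) * uLog lam w‖₊ : ℝ≥0∞)^2 *
          ENNReal.ofReal ((w.im)⁻¹ ^ 2) := by
    refine setLIntegral_congr_fun aux_measurableSet_discD (fun w hw => ?_)
    have heq : Wop (uLog lam) w + ((lam / 2 : ℝ) : ℂ) * uLog lam w
        = Gfun lam w + (lam:ℂ) * uLog lam w := by
      rw [Wop_uLog lam (lt_trans one_pos (aux_discD_im hw).1) (aux_discD_slit hw), Gfun]
    rw [heq]
  rw [hcong] at hfin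
  have hmG : AEMeasurable (fun w => (‖Gfun lam w + (lam:ℂ) * uLog lam w‖₊ : ℝ≥0∞)^2 *
      ENNReal.ofReal ((w.im)⁻¹ ^ 2)) (volume.restrict discD) := by
    have hc : ContinuousOn (fun w => Gfun lam w + (lam:ℂ) * uLog lam w) discD :=
      (aux_contOn_Gfun lam).add (continuous_const.continuousOn.mul (aux_contOn_uLog lam))
    exact (((hc.aestronglyMeasurable aux_measurableSet_discD).enorm.pow_const 2).mul
      aux_meas_weight.aemeasurable)
  have hkey : (∫⁻ w in discD, (‖Gfun lam w‖₊ : ℝ≥0∞)^2 * ENNReal.ofReal ((w.im)⁻¹ ^ 2))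
      ≤ 4 * (∫⁻ w in discD, (‖Gfun lam w + (lam:ℂ) * uLog lam w‖₊ : ℝ≥0∞)^2 *
            ENNReal.ofReal ((w.im)⁻¹ ^ 2)) +
        4 * (∫⁻ w in discD, (‖(lam:ℂ) * uLog lam w‖₊ : ℝ≥0∞)^2 *
            ENNReal.ofReal ((w.im)⁻¹ ^ 2)) := by
    calc (∫⁻ w in discD, (‖Gfun lam w‖₊ : ℝ≥0∞)^2 * ENNReal.ofReal ((w.im)⁻¹ ^ 2))
        ≤ ∫⁻ w in discD,
            (4 * ((‖Gfun lam w + (lam:ℂ) * uLog lam w‖₊ : ℝ≥0∞)^2 *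
              ENNReal.ofReal ((w.im)⁻¹ ^ 2)) +
             4 * ((‖(lam:ℂ) * uLog lam w‖₊ : ℝ≥0∞)^2 * ENNReal.ofReal ((w.im)⁻¹ ^ 2))) := by
          apply lintegral_mono fun w => ?_
          have h0 : Gfun lam w = (Gfun lam w + (lam:ℂ)*uLog lam w) - (lam:ℂ)*uLog lam w := by
            ring
          have htri : ‖Gfun lam w‖ ≤
              ‖Gfun lam w + (lam:ℂ)*uLog lam w‖ + ‖(lam:ℂ)*uLog lam w‖ := by
            nth_rewrite 1 [h0]; exact norm_sub_le _ _
          have h1 : (‖Gfun lam w‖₊ : ℝ≥0∞) ≤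
              (‖Gfun lam w + (lam:ℂ)*uLog lam w‖₊ : ℝ≥0∞) + (‖(lam:ℂ)*uLog lam w‖₊ : ℝ≥0∞) := by
            rw [← aux_ofReal_nnnorm, ← aux_ofReal_nnnorm,
              ← aux_ofReal_nnnorm, ← ENNReal.ofReal_add (norm_nonneg _) (norm_nonneg _)]
            exact ENNReal.ofReal_le_ofReal htri
          have h2 : (‖Gfun lam w‖₊ : ℝ≥0∞)^2 ≤
              4 * (‖Gfun lam w + (lam:ℂ)*uLog lam w‖₊ : ℝ≥0∞)^2 +
              4 * (‖(lam:ℂ)*uLog lam w‖₊ : ℝ≥0∞)^2 :=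
            le_trans (pow_le_pow_left' h1 2) (aux_sq_ineq _ _)
          calc (‖Gfun lam w‖₊ : ℝ≥0∞)^2 * ENNReal.ofReal ((w.im)⁻¹ ^ 2)
              ≤ (4 * (‖Gfun lam w + (lam:ℂ)*uLog lam w‖₊ : ℝ≥0∞)^2 +
                  4 * (‖(lam:ℂ)*uLog lam w‖₊ : ℝ≥0∞)^2) * ENNReal.ofReal ((w.im)⁻¹ ^ 2) :=
                mul_le_mul_left h2 _
            _ = 4 * ((‖Gfun lam w + (lam:ℂ)*uLog lam w‖₊ : ℝ≥0∞)^2 *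
                  ENNReal.ofReal ((w.im)⁻¹ ^ 2)) +
                4 * ((‖(lam:ℂ)*uLog lam w‖₊ : ℝ≥0∞)^2 * ENNReal.ofReal ((w.im)⁻¹ ^ 2)) := by
                ring
      _ = _ := by
          rw [lintegral_add_left' (hmG.const_mul 4),
            lintegral_const_mul' _ _ (by norm_num : (4:ℝ≥0∞) ≠ ⊤),
            lintegral_const_mul' _ _ (by norm_num : (4:ℝ≥0∞) ≠ ⊤)]
  have hfin2 : (∫⁻ w in discD, (‖Gfun lam w‖₊ : ℝ≥0∞)^2 * ENNReal.ofReal ((w.im)⁻¹ ^ 2)) < ⊤ := by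
    refine lt_of_le_of_lt hkey ?_
    apply ENNReal.add_lt_top.mpr
    constructor
    · exact ENNReal.mul_lt_top (by norm_num) hfin
    · exact ENNReal.mul_lt_top (by norm_num) (aux_lamu_fin hlam)
  exact hfin2.ne (aux_G_top hlam)

/-- for `λ ≥ 0`, the function `u = s^{λ/2} log(w - z₀)` on
`D = {|w - 2i| < 1}` lies in `L²(D)` and satisfies `(W̄ - λ/2)u = 0`, but
`(W + λ/2)u` is not in `L²(D)`: no full gain of regularity up to the boundary. -/
theorem boundary_regularity_counterexample (lam : ℝ) (hlam : 0 ≤ lam) :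
    HMemL2 discD (uLog lam) ∧
    (∀ w ∈ discD, Wbar (uLog lam) w - ((lam / 2 : ℝ) : ℂ) * uLog lam w = 0) ∧
    ¬ HMemL2 discD (fun w => Wop (uLog lam) w + ((lam / 2 : ℝ) : ℂ) * uLog lam w) := by
  exact ⟨⟨aux_aesm_uLog lam, aux_part1_fin hlam⟩, aux_part2 lam, aux_part3 hlam⟩
end
end
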